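/- arXiv:1501.02521 — 3 statements merged into one kernel-verified Lean document; each statement's English description precedes it below -/
import Mathlib

section
/- Let k be a field and A a k-algebra which is quasi-free over k. Then A is left and right coherent. -/
open TensorProduct MulOpposite CategoryTheory

universe u v w x

set_option linter.unusedSectionVars false
set_option linter.unusedVariables false

noncomputable section

/-- A ring `A` is *left coherent* if the kernel of any homomorphism between finitely
generated free left `A`-modules is finitely generated. -/
def LeftCoherent (A : Type*) [Ring A] : Prop :=
  ∀ (n m : ℕ) (f : (Fin n → A) →ₗ[A] (Fin m → A)), (LinearMap.ker f).FG

section BimoduleTensor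
variable (k : Type u) (A : Type v) [CommRing k] [Ring A] [Algebra k A]
variable (M : Type w) [AddCommGroup M] [Module k M] [Module A M] [IsScalarTower k A M]
variable (N : Type w') [AddCommGroup N] [Module k N] [Module Aᵐᵒᵖ N] [IsScalarTower k Aᵐᵒᵖ N]

/-- Right `A`-action on `M ⊗[k] N` through the second factor. -/
def rightEnd : Aᵐᵒᵖ →+* Module.End k (M ⊗[k] N) where
  toFun a := LinearMap.lTensor M ((Algebra.lsmul k k N) a)
  map_one' := by rw [map_one]; exact LinearMap.lTensor_id M N
  map_mul' a b := by rw [map_mul]; exact LinearMap.lTensor_comp M _ _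
  map_zero' := by rw [map_zero]; exact LinearMap.lTensor_zero M
  map_add' a b := by rw [map_add]; exact LinearMap.lTensor_add M _ _

/-- `M ⊗[k] N` as a module over `Aᵐᵒᵖ` (through the second factor). -/
def tensorRightModule : Module Aᵐᵒᵖ (M ⊗[k] N) := Module.compHom _ (rightEnd k A M N)

theorem tensorRightModule_smul_tmul (a : Aᵐᵒᵖ) (m : M) (n : N) :
    letI := tensorRightModule k A M N
    a • (m ⊗ₜ[k] n) = m ⊗ₜ[k] (a • n) := rfl

theorem tensorRightModule_isScalarTower :
    letI := tensorRightModule k A M N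
    IsScalarTower k Aᵐᵒᵖ (M ⊗[k] N) := by
  letI := tensorRightModule k A M N
  constructor
  intro c a x
  induction x using TensorProduct.induction_on with
  | zero => simp only [smul_zero]
  | tmul m n =>
      rw [tensorRightModule_smul_tmul, tensorRightModule_smul_tmul, smul_assoc, tmul_smul]
  | add x y hx hy => rw [smul_add, smul_add, smul_add, hx, hy]

theorem tensorRightModule_smulCommClass :
    letI := tensorRightModule k A M N
    SMulCommClass A Aᵐᵒᵖ (M ⊗[k] N) := by
  letI := tensorRightModule k A M N
  constructor
  intro a b x
  induction x using TensorProduct.induction_on with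
  | zero => simp only [smul_zero]
  | tmul m n =>
      rw [tensorRightModule_smul_tmul, smul_tmul', smul_tmul', tensorRightModule_smul_tmul]
  | add x y hx hy => rw [smul_add, smul_add, smul_add, smul_add, hx, hy]

/-- The `k`-central `A`-bimodule structure on `M ⊗[k] N`, as a module over the enveloping
algebra `A ⊗[k] Aᵐᵒᵖ`: here `A` acts on the left factor and `Aᵐᵒᵖ` on the right factor. -/
def bimoduleTensorModule : Module (A ⊗[k] Aᵐᵒᵖ) (M ⊗[k] N) :=
  letI := tensorRightModule k A M N
  haveI := tensorRightModule_isScalarTower k A M N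
  haveI := tensorRightModule_smulCommClass k A M N
  TensorProduct.Algebra.module

theorem bimoduleTensorModule_smul_tmul (a b : A) (m : M) (n : N) :
    letI := bimoduleTensorModule k A M N
    (a ⊗ₜ[k] (op b)) • (m ⊗ₜ[k] n) = (a • m) ⊗ₜ[k] ((op b) • n) := by
  letI := tensorRightModule k A M N
  letI := bimoduleTensorModule k A M N
  show (a • ((op b) • (m ⊗ₜ[k] n))) = (a • m) ⊗ₜ[k] ((op b) • n)
  rw [tensorRightModule_smul_tmul, smul_tmul']
end BimoduleTensor

section Env
variable (k : Type u) (A : Type u) [CommRing k] [Ring A] [Algebra k A]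

/-- `A` as a module over its enveloping algebra `A ⊗[k] Aᵐᵒᵖ`. -/
def envModuleSelf : Module (A ⊗[k] Aᵐᵒᵖ) A := TensorProduct.Algebra.module

/-- The multiplication map `A ⊗[k] A → A` as a morphism of modules over the
enveloping algebra `A ⊗[k] Aᵐᵒᵖ`. -/
def mulBimodHom :
    letI := bimoduleTensorModule k A A A
    letI := envModuleSelf k A
    (A ⊗[k] A) →ₗ[A ⊗[k] Aᵐᵒᵖ] A :=
  letI := bimoduleTensorModule k A A A
  letI := envModuleSelf k A
  { toFun := LinearMap.mul' k A
    map_add' := map_add _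
    map_smul' := by
      intro e x
      dsimp only [RingHom.id_apply]
      induction e using TensorProduct.induction_on with
      | zero => rw [(bimoduleTensorModule k A A A).zero_smul x, (envModuleSelf k A).zero_smul, map_zero]
      | tmul a b =>
          induction b using MulOpposite.rec' with
          | _ b =>
            induction x using TensorProduct.induction_on with
            | zero => simp only [smul_zero, map_zero]
            | tmul x y =>
                rw [bimoduleTensorModule_smul_tmul]
                show LinearMap.mul' k A ((a * x) ⊗ₜ[k] (y * b)) = (a ⊗ₜ[k] op b) • (LinearMap.mul' k A (x ⊗ₜ[k] y))
                rw [LinearMap.mul'_apply, LinearMap.mul'_apply]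
                show a * x * (y * b) = a • (op b) • (x * y)
                simp only [op_smul_eq_mul, smul_eq_mul, mul_assoc]
            | add x y hx hy => rw [smul_add, map_add, hx, hy, map_add, smul_add]
      | add e f he hf => rw [add_smul, map_add, he, hf, add_smul] }

/-- The bimodule `Ω¹_{A/k}` of relative noncommutative 1-forms: the kernel of the
multiplication map `A ⊗[k] A → A`, as a module over the enveloping algebra. -/
def OmegaOne :
    (letI := bimoduleTensorModule k A A A
     Submodule (A ⊗[k] Aᵐᵒᵖ) (A ⊗[k] A)) :=
  letI := bimoduleTensorModule k A A A
  letI := envModuleSelf k A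
  LinearMap.ker (mulBimodHom k A)

/-- An algebra `A` over a commutative ring `k` is *quasi-free* (relatively over `k`)
if the bimodule `Ω¹_{A/k}` of noncommutative relative 1-forms is a projective module over
the enveloping algebra `A ⊗[k] Aᵐᵒᵖ`. -/
def QuasiFree : Prop :=
  letI := bimoduleTensorModule k A A A
  Module.Projective (A ⊗[k] Aᵐᵒᵖ) (OmegaOne k A)
end Env

/-! ### Auxiliary development for the proof -/

attribute [local instance] bimoduleTensorModule envModuleSelf

/-- Fix the instance diamond: the enveloping algebra acting on itself. -/
abbrev envSelfModule (k A : Type u) [CommRing k] [Ring A] [Algebra k A] :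
    Module (A ⊗[k] Aᵐᵒᵖ) (A ⊗[k] Aᵐᵒᵖ) := Semiring.toModule

attribute [local instance 2000] envSelfModule
set_option synthInstance.maxHeartbeats 1000000

section CoreCommon
variable (k A : Type u) [Field k] [Ring A] [Algebra k A]

theorem mulBimodHom_apply' (w : A ⊗[k] A) : mulBimodHom k A w = LinearMap.mul' k A w := rfl

theorem mem_omegaOne' {w : A ⊗[k] A} : w ∈ OmegaOne k A ↔ LinearMap.mul' k A w = 0 :=
  Iff.rfl

/-- The universal derivation `c ↦ c ⊗ 1 - 1 ⊗ c`, as an element of `Ω¹`. -/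
def omegaf (c : A) : ↥(OmegaOne k A) :=
  ⟨c ⊗ₜ[k] 1 - 1 ⊗ₜ[k] c, by
    rw [mem_omegaOne', map_sub, LinearMap.mul'_apply, LinearMap.mul'_apply, mul_one, one_mul,
      sub_self]⟩

@[simp] theorem omegaf_val (c : A) :
    (omegaf k A c : A ⊗[k] A) = c ⊗ₜ[k] 1 - 1 ⊗ₜ[k] c := rfl

theorem omegaf_zero : omegaf k A 0 = 0 := by
  apply Subtype.ext; simp

theorem omegaf_add (c c' : A) : omegaf k A (c + c') = omegaf k A c + omegaf k A c' := by
  apply Subtype.ext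
  simp only [omegaf_val, Submodule.coe_add, add_tmul, tmul_add]
  abel

theorem esmul_tmul (a b x y : A) :
    (a ⊗ₜ[k] op b) • (x ⊗ₜ[k] y) = (a * x) ⊗ₜ[k] (y * b) := by
  rw [bimoduleTensorModule_smul_tmul, op_smul_eq_mul, smul_eq_mul]

theorem omegaf_leibniz (a c : A) :
    omegaf k A (a * c) = (a ⊗ₜ[k] (1 : Aᵐᵒᵖ)) • omegaf k A c
      + ((1 : A) ⊗ₜ[k] op c) • omegaf k A a := by
  apply Subtype.ext
  rw [Submodule.coe_add, Submodule.coe_smul, Submodule.coe_smul]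
  simp only [omegaf_val]
  rw [show (1 : Aᵐᵒᵖ) = op (1 : A) from rfl]
  rw [smul_sub, smul_sub, esmul_tmul, esmul_tmul, esmul_tmul, esmul_tmul]
  simp only [mul_one, one_mul]
  abel

theorem omegaf_leibniz' (a c : A) :
    omegaf k A (c * a) = (c ⊗ₜ[k] (1 : Aᵐᵒᵖ)) • omegaf k A a
      + ((1 : A) ⊗ₜ[k] op a) • omegaf k A c := by
  rw [omegaf_leibniz]

end CoreCommon

section CoreLeft
variable (k A : Type u) [Field k] [Ring A] [Algebra k A]
variable (M : Type u) [AddCommGroup M] [Module k M] [Module A M] [IsScalarTower k A M]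

/-- The action of `A` on `M` as a `k`-bilinear map. -/
def actHom : A →ₗ[k] M →ₗ[k] M := (Algebra.lsmul k k M).toLinearMap

@[simp] theorem actHom_apply (a : A) (m : M) : actHom k A M a m = a • m := rfl

/-- The action map `A ⊗[k] M → M`, as an `A`-linear map. -/
def piM : A ⊗[k] M →ₗ[A] M where
  toFun := TensorProduct.lift (actHom k A M)
  map_add' := map_add _
  map_smul' := by
    intro a x
    dsimp only [RingHom.id_apply]
    induction x using TensorProduct.induction_on with
    | zero => rw [smul_zero, map_zero, smul_zero]
    | tmul c m =>
        rw [smul_tmul']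
        simp only [TensorProduct.lift.tmul, actHom_apply, smul_eq_mul, mul_smul]
    | add x y hx hy => rw [smul_add, map_add, hx, hy, map_add, smul_add]

@[simp] theorem piM_tmul (c : A) (m : M) : piM k A M (c ⊗ₜ[k] m) = c • m := by
  simp [piM]

theorem piM_surjective : Function.Surjective (piM k A M) := fun m =>
  ⟨1 ⊗ₜ[k] m, by simp⟩

/-- `m ↦ (x ⊗ y ↦ x ⊗ (y • m))`, `k`-linear in `m`. -/
def LmapHom : M →ₗ[k] (A ⊗[k] A →ₗ[k] A ⊗[k] M) :=
  (LinearMap.lTensorHom A).comp (actHom k A M).flip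

@[simp] theorem LmapHom_tmul (m : M) (x y : A) :
    LmapHom k A M m (x ⊗ₜ[k] y) = x ⊗ₜ[k] (y • m) := rfl

theorem LmapHom_esmul (a b : A) (m : M) (w : A ⊗[k] A) :
    LmapHom k A M m ((a ⊗ₜ[k] op b) • w) = a • LmapHom k A M (b • m) w := by
  induction w using TensorProduct.induction_on with
  | zero => rw [smul_zero, map_zero, map_zero, smul_zero]
  | tmul x y =>
      rw [esmul_tmul, LmapHom_tmul, LmapHom_tmul, smul_tmul']
      rw [smul_eq_mul, mul_smul]
  | add x y hx hy => rw [smul_add, map_add, map_add, hx, hy, smul_add]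

theorem piM_LmapHom (m : M) (w : A ⊗[k] A) :
    piM k A M (LmapHom k A M m w) = (LinearMap.mul' k A w) • m := by
  induction w using TensorProduct.induction_on with
  | zero => simp
  | tmul x y => rw [LmapHom_tmul, piM_tmul, LinearMap.mul'_apply, mul_smul]
  | add x y hx hy => rw [map_add, map_add, hx, hy, map_add, add_smul]

end CoreLeft

section ReprCommon
variable (k A : Type u) [Field k] [Ring A] [Algebra k A]
variable (M : Type u) [AddCommGroup M] [Module k M]

/-- The chosen `k`-basis of `M`. -/
abbrev bM : Module.Basis (Module.Basis.ofVectorSpaceIndex k M) k M := Module.Basis.ofVectorSpace k M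

/-- Decomposition of `A ⊗[k] M` along a `k`-basis of `M`. -/
def reprAM : (A ⊗[k] M) ≃ₗ[k] ((Module.Basis.ofVectorSpaceIndex k M) →₀ A) :=
  letI := Classical.decEq (Module.Basis.ofVectorSpaceIndex k M)
  (TensorProduct.congr (LinearEquiv.refl k A) (bM k M).repr).trans
    (TensorProduct.finsuppScalarRight k k A (Module.Basis.ofVectorSpaceIndex k M))

theorem reprAM_symm_single (j : Module.Basis.ofVectorSpaceIndex k M) (c : A) :
    (reprAM k A M).symm (Finsupp.single j c) = c ⊗ₜ[k] (bM k M j : M) := by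
  letI := Classical.decEq (Module.Basis.ofVectorSpaceIndex k M)
  rw [reprAM]
  rw [LinearEquiv.trans_symm, LinearEquiv.trans_apply,
    TensorProduct.finsuppScalarRight_symm_apply_single, TensorProduct.congr_symm_tmul]
  simp [Module.Basis.repr_symm_apply]

theorem reprAM_symm_sum (f : (Module.Basis.ofVectorSpaceIndex k M) →₀ A) :
    (f.sum fun j c => c ⊗ₜ[k] (bM k M j : M)) = (reprAM k A M).symm f := by
  induction f using Finsupp.induction_linear with
  | zero => simp
  | add f g hf hg =>
      rw [map_add, Finsupp.sum_add_index' (by intro j; exact TensorProduct.zero_tmul _ _)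
        (by intro j c1 c2; exact TensorProduct.add_tmul _ _ _), hf, hg]
  | single j c =>
      rw [Finsupp.sum_single_index (a := j) (TensorProduct.zero_tmul _ _), reprAM_symm_single]

theorem reprAM_reconstruct (t : A ⊗[k] M) :
    ((reprAM k A M t).sum fun j c => c ⊗ₜ[k] (bM k M j : M)) = t := by
  rw [reprAM_symm_sum, LinearEquiv.symm_apply_apply]

end ReprCommon

section CoreLeftB
variable (k A : Type u) [Field k] [Ring A] [Algebra k A]
variable (M : Type u) [AddCommGroup M] [Module k M] [Module A M] [IsScalarTower k A M]

theorem reprAM_smul (a : A) (t : A ⊗[k] M) :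
    reprAM k A M (a • t) = a • reprAM k A M t := by
  have key : ∀ f : (Module.Basis.ofVectorSpaceIndex k M) →₀ A,
      (reprAM k A M).symm (a • f) = a • (reprAM k A M).symm f := by
    intro f
    induction f using Finsupp.induction_linear with
    | zero => rw [smul_zero, map_zero, smul_zero]
    | add f g hf hg => rw [smul_add, map_add, map_add, hf, hg, smul_add]
    | single j c =>
        simp only [Finsupp.smul_single, reprAM_symm_single, smul_tmul']
  apply (reprAM k A M).symm.injective
  rw [LinearEquiv.symm_apply_apply, key, LinearEquiv.symm_apply_apply]

theorem reprAM_pi (t : A ⊗[k] M) :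
    ((reprAM k A M t).sum fun j c => c • (bM k M j : M)) = piM k A M t := by
  have key : ∀ f : (Module.Basis.ofVectorSpaceIndex k M) →₀ A,
      (f.sum fun j c => c • (bM k M j : M)) = piM k A M ((reprAM k A M).symm f) := by
    intro f
    induction f using Finsupp.induction_linear with
    | zero => simp
    | add f g hf hg =>
        rw [map_add, map_add, Finsupp.sum_add_index' (by intro j; exact zero_smul A _)
          (by intro j c1 c2; exact add_smul _ _ _), hf, hg]
    | single j c =>
        rw [Finsupp.sum_single_index (a := j) (zero_smul A _), reprAM_symm_single, piM_tmul]
  rw [key, LinearEquiv.symm_apply_apply]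

end CoreLeftB

section CoreLeft2
variable (k A : Type u) [Field k] [Ring A] [Algebra k A]
variable (M : Type u) [AddCommGroup M] [Module k M] [Module A M] [IsScalarTower k A M]

/-- Generators of the kernel of `piM`. -/
def genL (p : (↥(OmegaOne k A)) × (Module.Basis.ofVectorSpaceIndex k M)) : A ⊗[k] M :=
  LmapHom k A M (bM k M p.2) p.1.val

/-- The total map from the free module on the generators. -/
def GtotL : (((↥(OmegaOne k A)) × (Module.Basis.ofVectorSpaceIndex k M)) →₀ A) →ₗ[A] A ⊗[k] M :=
  Finsupp.linearCombination A (genL k A M)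

theorem GtotL_single (p) (a : A) :
    GtotL k A M (Finsupp.single p a) = a • genL k A M p := by
  simp [GtotL]

def innerL (ω' : ↥(OmegaOne k A)) (x : A) (b : Aᵐᵒᵖ) :
    M →ₗ[k] (((↥(OmegaOne k A)) × (Module.Basis.ofVectorSpaceIndex k M)) →₀ A) :=
  (((Finsupp.lsum k fun j => (Finsupp.lsingle (ω', j)).comp
      (LinearMap.toSpanSingleton k A x)).comp
        ((bM k M).repr : M →ₗ[k] (Module.Basis.ofVectorSpaceIndex k M →₀ k)))).comp
    (actHom k A M (unop b))

theorem innerL_apply (ω' : ↥(OmegaOne k A)) (x : A) (b : Aᵐᵒᵖ) (m : M) :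
    innerL k A M ω' x b m
      = ((bM k M).repr (unop b • m)).sum fun j lam => Finsupp.single (ω', j) (lam • x) := by
  simp [innerL, Finsupp.lsum_apply]
  rfl

/-- The coefficient bilinear map associated to a basis element `ω'`. -/
def PsiL (ω' : ↥(OmegaOne k A)) :
    (A ⊗[k] Aᵐᵒᵖ) →ₗ[k]
      (M →ₗ[k] (((↥(OmegaOne k A)) × (Module.Basis.ofVectorSpaceIndex k M)) →₀ A)) :=
  TensorProduct.lift (LinearMap.mk₂ k (innerL k A M ω')
    (by
      intro x1 x2 b; refine LinearMap.ext fun m => ?_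
      simp only [innerL_apply, LinearMap.add_apply]
      rw [← Finsupp.sum_add]
      exact Finsupp.sum_congr fun j _ => by rw [smul_add, Finsupp.single_add])
    (by
      intro c x b; refine LinearMap.ext fun m => ?_
      simp only [innerL_apply, LinearMap.smul_apply]
      rw [Finsupp.smul_sum]
      exact Finsupp.sum_congr fun j _ => by rw [smul_comm, Finsupp.smul_single])
    (by
      intro x b1 b2; refine LinearMap.ext fun m => ?_
      simp only [innerL_apply, LinearMap.add_apply, MulOpposite.unop_add, add_smul, map_add]
      rw [Finsupp.sum_add_index' (by intro j; rw [zero_smul, Finsupp.single_zero])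
        (by intro j l1 l2; rw [add_smul, Finsupp.single_add])])
    (by
      intro c x b; refine LinearMap.ext fun m => ?_
      simp only [innerL_apply, LinearMap.smul_apply, MulOpposite.unop_smul, smul_assoc, map_smul]
      rw [Finsupp.sum_smul_index' (by intro j; rw [zero_smul, Finsupp.single_zero]),
        Finsupp.smul_sum]
      exact Finsupp.sum_congr fun j _ => by rw [smul_assoc, Finsupp.smul_single]))

theorem PsiL_tmul (ω' : ↥(OmegaOne k A)) (x : A) (b : Aᵐᵒᵖ) (m : M) :
    PsiL k A M ω' (x ⊗ₜ[k] b) m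
      = ((bM k M).repr (unop b • m)).sum fun j lam => Finsupp.single (ω', j) (lam • x) := by
  rw [PsiL, TensorProduct.lift.tmul]
  exact innerL_apply k A M ω' x b m

theorem PsiL_mul_left (ω' : ↥(OmegaOne k A)) (a : A) (e : A ⊗[k] Aᵐᵒᵖ) (m : M) :
    PsiL k A M ω' ((a ⊗ₜ[k] (1 : Aᵐᵒᵖ)) * e) m = a • PsiL k A M ω' e m := by
  induction e using TensorProduct.induction_on with
  | zero => rw [mul_zero, map_zero, LinearMap.zero_apply, smul_zero]
  | tmul x b =>
      rw [Algebra.TensorProduct.tmul_mul_tmul, one_mul, PsiL_tmul, PsiL_tmul, Finsupp.smul_sum]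
      exact Finsupp.sum_congr fun j _ => by
        rw [Finsupp.smul_single, smul_comm, smul_eq_mul]
  | add e1 e2 h1 h2 =>
      rw [mul_add, map_add, LinearMap.add_apply, h1, h2, map_add, LinearMap.add_apply, smul_add]

theorem PsiL_mul_right (ω' : ↥(OmegaOne k A)) (c : A) (e : A ⊗[k] Aᵐᵒᵖ) (m : M) :
    PsiL k A M ω' (((1 : A) ⊗ₜ[k] op c) * e) m = PsiL k A M ω' e (c • m) := by
  induction e using TensorProduct.induction_on with
  | zero => rw [mul_zero, map_zero, LinearMap.zero_apply, LinearMap.zero_apply]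
  | tmul x b =>
      rw [Algebra.TensorProduct.tmul_mul_tmul, one_mul, PsiL_tmul, PsiL_tmul]
      rw [show unop (op c * b) • m = unop b • (c • m) by
        rw [MulOpposite.unop_mul, MulOpposite.unop_op, mul_smul]]
  | add e1 e2 h1 h2 =>
      rw [mul_add, map_add, LinearMap.add_apply, h1, h2, map_add, LinearMap.add_apply]

theorem GtotL_PsiL (ω' : ↥(OmegaOne k A)) (e : A ⊗[k] Aᵐᵒᵖ) (m : M) :
    GtotL k A M (PsiL k A M ω' e m) = LmapHom k A M m (e • (ω' : A ⊗[k] A)) := by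
  induction e using TensorProduct.induction_on with
  | zero => rw [map_zero, LinearMap.zero_apply, map_zero, (bimoduleTensorModule k A A A).zero_smul, map_zero]
  | tmul x b =>
      rw [PsiL_tmul, map_finsuppSum]
      have expand : LmapHom k A M (unop b • m) (ω' : A ⊗[k] A)
          = ((bM k M).repr (unop b • m)).sum
              fun j lam => lam • (LmapHom k A M (bM k M j) (ω' : A ⊗[k] A)) := by
        conv_lhs => rw [← (bM k M).linearCombination_repr (unop b • m),
          Finsupp.linearCombination_apply, map_finsuppSum]
        rw [LinearMap.finsupp_sum_apply]
        exact Finsupp.sum_congr fun j _ => by rw [map_smul, LinearMap.smul_apply]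
      have : (x ⊗ₜ[k] b) • (ω' : A ⊗[k] A) = (x ⊗ₜ[k] op (unop b)) • (ω' : A ⊗[k] A) := by
        rw [MulOpposite.op_unop]
      rw [this, LmapHom_esmul, expand, Finsupp.smul_sum]
      exact Finsupp.sum_congr fun j lam => by
        rw [GtotL_single, genL, smul_comm, smul_assoc]
  | add e1 e2 h1 h2 =>
      rw [map_add, LinearMap.add_apply, map_add, h1, h2, add_smul, map_add]

end CoreLeft2

section CoreLeft3
variable (k A : Type u) [Field k] [Ring A] [Algebra k A]
variable (M : Type u) [AddCommGroup M] [Module k M] [Module A M] [IsScalarTower k A M]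
variable (s : (↥(OmegaOne k A)) →ₗ[A ⊗[k] Aᵐᵒᵖ] ((↥(OmegaOne k A)) →₀ A ⊗[k] Aᵐᵒᵖ))

/-- The coefficient map associated to a projectivity witness `s` for `Ω¹`. -/
def PhiL (ω : ↥(OmegaOne k A)) :
    M →ₗ[k] (((↥(OmegaOne k A)) × (Module.Basis.ofVectorSpaceIndex k M)) →₀ A) :=
  (s ω).sum fun ω' e => PsiL k A M ω' e

theorem PhiL_zero : PhiL k A M s 0 = 0 := by
  rw [PhiL, map_zero, Finsupp.sum_zero_index]

theorem PhiL_add (ω1 ω2 : ↥(OmegaOne k A)) :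
    PhiL k A M s (ω1 + ω2) = PhiL k A M s ω1 + PhiL k A M s ω2 := by
  rw [PhiL, PhiL, PhiL, map_add,
    Finsupp.sum_add_index' (fun ω' => map_zero _) (fun ω' e1 e2 => map_add _ _ _)]

theorem PhiL_smul_left (a : A) (ω : ↥(OmegaOne k A)) (m : M) :
    PhiL k A M s ((a ⊗ₜ[k] (1 : Aᵐᵒᵖ)) • ω) m = a • PhiL k A M s ω m := by
  rw [PhiL, PhiL, map_smul, LinearMap.finsupp_sum_apply, LinearMap.finsupp_sum_apply,
    Finsupp.sum_smul_index' (fun ω' => by rw [map_zero, LinearMap.zero_apply]),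
    Finsupp.smul_sum]
  exact Finsupp.sum_congr fun ω' _ => by rw [smul_eq_mul, PsiL_mul_left]

theorem PhiL_smul_right (c : A) (ω : ↥(OmegaOne k A)) (m : M) :
    PhiL k A M s (((1 : A) ⊗ₜ[k] op c) • ω) m = PhiL k A M s ω (c • m) := by
  rw [PhiL, PhiL, map_smul, LinearMap.finsupp_sum_apply, LinearMap.finsupp_sum_apply,
    Finsupp.sum_smul_index' (fun ω' => by rw [map_zero, LinearMap.zero_apply])]
  exact Finsupp.sum_congr fun ω' _ => by rw [smul_eq_mul, PsiL_mul_right]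

theorem PhiL_total
    (hs : Function.LeftInverse (Finsupp.linearCombination (A ⊗[k] Aᵐᵒᵖ) id) s)
    (ω : ↥(OmegaOne k A)) (m : M) :
    GtotL k A M (PhiL k A M s ω m) = LmapHom k A M m (ω : A ⊗[k] A) := by
  rw [PhiL, LinearMap.finsupp_sum_apply, map_finsuppSum]
  have h1 : ((Finsupp.linearCombination (A ⊗[k] Aᵐᵒᵖ) id (s ω) : ↥(OmegaOne k A)) : A ⊗[k] A)
      = (s ω).sum fun ω' e => e • (ω' : A ⊗[k] A) := by
    rw [Finsupp.linearCombination_apply, Finsupp.sum, Finsupp.sum,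
      AddSubmonoidClass.coe_finset_sum]
    exact Finset.sum_congr rfl fun ω' _ => rfl
  calc (s ω).sum (fun ω' e => GtotL k A M (PsiL k A M ω' e m))
      = (s ω).sum fun ω' e => LmapHom k A M m (e • (ω' : A ⊗[k] A)) :=
        Finsupp.sum_congr fun ω' _ => GtotL_PsiL k A M ω' _ m
    _ = LmapHom k A M m ((s ω).sum fun ω' e => e • (ω' : A ⊗[k] A)) :=
        (map_finsuppSum _ _ _).symm
    _ = LmapHom k A M m (ω : A ⊗[k] A) := by rw [← h1, hs ω]

/-- Key step: the kernel of the action map `A ⊗[k] M → M` is a projective `A`-module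
when `A` is quasi-free over `k`. -/
theorem kerPiM_projective (hqf : QuasiFree k A) :
    Module.Projective A ↥(LinearMap.ker (piM k A M)) := by
  obtain ⟨s, hs⟩ := Module.projective_def.mp hqf
  have hGmem : ∀ f, GtotL k A M f ∈ LinearMap.ker (piM k A M) := by
    intro f
    rw [LinearMap.mem_ker, GtotL, Finsupp.linearCombination_apply, map_finsuppSum,
      Finsupp.sum]
    apply Finset.sum_eq_zero; intro p _
    rw [map_smul, genL, piM_LmapHom, (mem_omegaOne' k A).mp p.1.2, zero_smul, smul_zero]
  have h0 : ∀ j : Module.Basis.ofVectorSpaceIndex k M,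
      (fun (j : Module.Basis.ofVectorSpaceIndex k M) (c : A) =>
        PhiL k A M s (omegaf k A c) (bM k M j)) j 0 = 0 := by
    intro j; dsimp only; rw [omegaf_zero, PhiL_zero, LinearMap.zero_apply]
  have hadd : ∀ (j : Module.Basis.ofVectorSpaceIndex k M) (c1 c2 : A),
      PhiL k A M s (omegaf k A (c1 + c2)) (bM k M j)
        = PhiL k A M s (omegaf k A c1) (bM k M j) + PhiL k A M s (omegaf k A c2) (bM k M j) := by
    intro j c1 c2; rw [omegaf_add, PhiL_add, LinearMap.add_apply]
  set Kr := LinearMap.ker (piM k A M) with hKr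
  let cfun : ↥Kr → (((↥(OmegaOne k A)) × (Module.Basis.ofVectorSpaceIndex k M)) →₀ A) :=
    fun x => (reprAM k A M x.val).sum fun j c => PhiL k A M s (omegaf k A c) (bM k M j)
  have hsplit : ∀ x : ↥Kr, GtotL k A M (cfun x) = x.val := by
    intro x
    have hx0 : piM k A M x.val = 0 := LinearMap.mem_ker.mp x.2
    calc GtotL k A M (cfun x)
        = (reprAM k A M x.val).sum
            fun j c => GtotL k A M (PhiL k A M s (omegaf k A c) (bM k M j)) :=
          map_finsuppSum _ _ _
      _ = (reprAM k A M x.val).sum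
            fun j c => c ⊗ₜ[k] (bM k M j : M) - (1 : A) ⊗ₜ[k] (c • (bM k M j : M)) := by
          refine Finsupp.sum_congr fun j _ => ?_
          rw [PhiL_total k A M s hs, omegaf_val, map_sub, LmapHom_tmul, LmapHom_tmul, one_smul]
      _ = ((reprAM k A M x.val).sum fun j c => c ⊗ₜ[k] (bM k M j : M))
          - ((reprAM k A M x.val).sum fun j c => (1 : A) ⊗ₜ[k] (c • (bM k M j : M))) :=
          Finsupp.sum_sub
      _ = x.val - (TensorProduct.mk k A M 1)
            ((reprAM k A M x.val).sum fun j c => c • (bM k M j : M)) := by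
          rw [reprAM_reconstruct, map_finsuppSum]
          rfl
      _ = x.val := by rw [reprAM_pi, hx0, map_zero, sub_zero]
  have csmul : ∀ (a : A) (x : ↥Kr), cfun (a • x) = a • cfun x := by
    intro a x
    have hx0 : piM k A M x.val = 0 := LinearMap.mem_ker.mp x.2
    have : cfun (a • x) = (reprAM k A M (a • x.val)).sum
        fun j c => PhiL k A M s (omegaf k A c) (bM k M j) := rfl
    rw [this, reprAM_smul, Finsupp.sum_smul_index' h0]
    have step : ∀ (j : Module.Basis.ofVectorSpaceIndex k M) (c : A),
        PhiL k A M s (omegaf k A (a • c)) (bM k M j)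
          = a • PhiL k A M s (omegaf k A c) (bM k M j)
            + PhiL k A M s (omegaf k A a) (c • (bM k M j : M)) := by
      intro j c
      rw [smul_eq_mul, omegaf_leibniz, PhiL_add, LinearMap.add_apply, PhiL_smul_left,
        PhiL_smul_right]
    have hcongr : (reprAM k A M x.val).sum
        (fun j c => PhiL k A M s (omegaf k A (a • c)) (bM k M j))
        = (reprAM k A M x.val).sum (fun j c =>
            a • PhiL k A M s (omegaf k A c) (bM k M j)
              + PhiL k A M s (omegaf k A a) (c • (bM k M j : M))) :=
      Finsupp.sum_congr fun j _ => step j _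
    rw [hcongr, Finsupp.sum_add]
    have last : ((reprAM k A M x.val).sum
        fun j c => PhiL k A M s (omegaf k A a) (c • (bM k M j : M))) = 0 := by
      rw [← map_finsuppSum (PhiL k A M s (omegaf k A a)), reprAM_pi, hx0, map_zero]
    rw [last, add_zero, ← Finsupp.smul_sum]
  let cmap : ↥Kr →ₗ[A] (((↥(OmegaOne k A)) × (Module.Basis.ofVectorSpaceIndex k M)) →₀ A) :=
    { toFun := cfun
      map_add' := by
        intro x y
        have : cfun (x + y) = (reprAM k A M (x.val + y.val)).sum
            fun j c => PhiL k A M s (omegaf k A c) (bM k M j) := rfl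
        rw [this, map_add, Finsupp.sum_add_index' h0 hadd]
      map_smul' := csmul }
  refine Module.Projective.of_split cmap ((GtotL k A M).codRestrict Kr hGmem) ?_
  refine LinearMap.ext fun x => Subtype.ext ?_
  rw [LinearMap.comp_apply, LinearMap.codRestrict_apply, LinearMap.id_apply]
  exact hsplit x

/-- `A ⊗[k] M` is projective over `A`. -/
theorem tensorLeft_projective : Module.Projective A (A ⊗[k] M) := by
  have e : (A ⊗[k] M) ≃ₗ[A] ((Module.Basis.ofVectorSpaceIndex k M) →₀ A) :=
    { toFun := reprAM k A M
      map_add' := map_add _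
      map_smul' := reprAM_smul k A M
      invFun := (reprAM k A M).symm
      left_inv := (reprAM k A M).left_inv
      right_inv := (reprAM k A M).right_inv }
  exact Module.Projective.of_equiv e.symm

end CoreLeft3

section Coherence

/-- If every quotient of a finite free module admits a projective presentation with
projective kernel, then the ring is left coherent. -/
theorem leftCoherent_of_resolutions (R : Type u) [Ring R]
    (H : ∀ (m : ℕ) (N : Submodule R (Fin m → R)),
      ∃ (F : Type u) (_ : AddCommGroup F) (_ : Module R F) (h : F →ₗ[R] ((Fin m → R) ⧸ N)),
        Module.Projective R F ∧ Function.Surjective h ∧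
          Module.Projective R ↥(LinearMap.ker h)) :
    LeftCoherent R := by
  intro n m f
  set N : Submodule R (Fin m → R) := LinearMap.range f with hN
  obtain ⟨F, _, _, h, hFproj, hsurj, hkerproj⟩ := H m N
  haveI := hFproj
  haveI := hkerproj
  let φ : (F × (Fin m → R)) →ₗ[R] ((Fin m → R) ⧸ N) :=
    h.comp (LinearMap.fst R F (Fin m → R)) - (N.mkQ).comp (LinearMap.snd R F (Fin m → R))
  set X := LinearMap.ker φ with hX
  let p1 : ↥X →ₗ[R] F := (LinearMap.fst R F (Fin m → R)).comp X.subtype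
  let p2 : ↥X →ₗ[R] (Fin m → R) := (LinearMap.snd R F (Fin m → R)).comp X.subtype
  have memX : ∀ (u : F) (v : Fin m → R), ((u, v) ∈ X ↔ h u = N.mkQ v) := by
    intro u v
    rw [hX, LinearMap.mem_ker]
    show h u - N.mkQ v = 0 ↔ _
    rw [sub_eq_zero]
  have p1surj : Function.Surjective p1 := by
    intro u
    obtain ⟨v, hv⟩ := Submodule.mkQ_surjective N (h u)
    exact ⟨⟨(u, v), (memX u v).mpr hv.symm⟩, rfl⟩
  have p2surj : Function.Surjective p2 := by
    intro v
    obtain ⟨u, hu⟩ := hsurj (N.mkQ v)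
    exact ⟨⟨(u, v), (memX u v).mpr hu⟩, rfl⟩
  -- `ker p2` is isomorphic to `ker h`, hence projective
  have hmem1 : ∀ z : ↥(LinearMap.ker h),
      ((z : F), (0 : Fin m → R)) ∈ X := by
    intro z
    rw [memX]
    rw [LinearMap.mem_ker.mp z.2, map_zero]
  let j1 : ↥(LinearMap.ker h) →ₗ[R] ↥X :=
    ((LinearMap.inl R F (Fin m → R)).comp (LinearMap.ker h).subtype).codRestrict X
      (fun z => hmem1 z)
  let i1 : ↥(LinearMap.ker h) →ₗ[R] ↥(LinearMap.ker p2) :=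
    j1.codRestrict (LinearMap.ker p2) (fun z => by
      rw [LinearMap.mem_ker]
      rfl)
  let r1 : ↥(LinearMap.ker p2) →ₗ[R] ↥(LinearMap.ker h) :=
    (p1.comp (LinearMap.ker p2).subtype).codRestrict (LinearMap.ker h) (fun y => by
      rw [LinearMap.mem_ker]
      have hy2 : (((y : ↥X) : F × (Fin m → R)).2) = 0 := LinearMap.mem_ker.mp y.2
      have hy1 := (memX ((y : ↥X) : F × (Fin m → R)).1 (((y : ↥X) : F × (Fin m → R)).2)).mp
        (by exact ((y : ↥X)).2)
      show h (((y : ↥X) : F × (Fin m → R)).1) = 0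
      rw [hy1, hy2, map_zero])
  haveI hkerp2 : Module.Projective R ↥(LinearMap.ker p2) := by
    refine Module.Projective.of_split r1 i1 ?_
    refine LinearMap.ext fun y => Subtype.ext (Subtype.ext ?_)
    have hy2 : (((y : ↥X) : F × (Fin m → R)).2) = 0 := LinearMap.mem_ker.mp y.2
    show ((((y : ↥X) : F × (Fin m → R)).1), (0 : Fin m → R)) = ((y : ↥X) : F × (Fin m → R))
    exact Prod.ext rfl hy2.symm
  -- `X` is projective
  obtain ⟨t, ht⟩ := Module.projective_lifting_property p2 LinearMap.id p2surj
  let u1 : ↥X →ₗ[R] (↥(LinearMap.ker p2) × (Fin m → R)) :=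
    LinearMap.prod ((LinearMap.id - t.comp p2).codRestrict (LinearMap.ker p2) (fun x => by
      rw [LinearMap.mem_ker]
      show p2 (x - t (p2 x)) = 0
      rw [map_sub, show p2 (t (p2 x)) = p2 x from LinearMap.congr_fun ht (p2 x), sub_self])) p2
  let v1 : (↥(LinearMap.ker p2) × (Fin m → R)) →ₗ[R] ↥X :=
    (LinearMap.ker p2).subtype.coprod t
  haveI hXproj : Module.Projective R ↥X := by
    refine Module.Projective.of_split u1 v1 ?_
    refine LinearMap.ext fun x => ?_
    show (x - t (p2 x)) + t (p2 x) = x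
    rw [sub_add_cancel]
  -- `N` is a retract of `X`, hence projective
  obtain ⟨r, hr⟩ := Module.projective_lifting_property p1 LinearMap.id p1surj
  let iN : ↥N →ₗ[R] ↥X :=
    ((LinearMap.inr R F (Fin m → R)).comp N.subtype).codRestrict X (fun w => by
      rw [memX]
      show h 0 = N.mkQ (w : Fin m → R)
      have : (w : Fin m → R) ∈ LinearMap.ker N.mkQ := by rw [Submodule.ker_mkQ]; exact w.2
      rw [map_zero, LinearMap.mem_ker.mp this])
  let ρ : ↥X →ₗ[R] ↥N :=
    (p2.comp (LinearMap.id - r.comp p1)).codRestrict N (fun x => by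
      have hk : p1 (x - r (p1 x)) = 0 := by
        rw [map_sub, show p1 (r (p1 x)) = p1 x from LinearMap.congr_fun hr (p1 x), sub_self]
      have hx : h (p1 (x - r (p1 x))) = N.mkQ (p2 (x - r (p1 x))) := by
        have := ((x - r (p1 x)) : ↥X).2
        exact (memX _ _).mp this
      rw [hk, map_zero] at hx
      rw [← Submodule.ker_mkQ N, LinearMap.mem_ker]
      exact hx.symm)
  haveI hNproj : Module.Projective R ↥N := by
    refine Module.Projective.of_split iN ρ ?_
    refine LinearMap.ext fun w => Subtype.ext ?_
    have h1 : p1 (iN w) = 0 := rfl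
    show p2 (iN w - r (p1 (iN w))) = (w : Fin m → R)
    rw [h1, map_zero, sub_zero]
    rfl
  -- conclude
  obtain ⟨σ, hσ⟩ := Module.projective_lifting_property f.rangeRestrict LinearMap.id
    f.surjective_rangeRestrict
  let q : (Fin n → R) →ₗ[R] (Fin n → R) := LinearMap.id - σ.comp f.rangeRestrict
  have hq : Submodule.map q ⊤ = LinearMap.ker f := by
    apply le_antisymm
    · rintro y ⟨x, -, rfl⟩
      rw [LinearMap.mem_ker]
      show f (x - σ (f.rangeRestrict x)) = 0
      rw [map_sub]
      have h2 : f (σ (f.rangeRestrict x))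
          = (f.rangeRestrict (σ (f.rangeRestrict x)) : Fin m → R) := rfl
      rw [h2, show f.rangeRestrict (σ (f.rangeRestrict x)) = f.rangeRestrict x from LinearMap.congr_fun hσ (f.rangeRestrict x)]
      show f x - f.rangeRestrict x = 0
      rw [show ((f.rangeRestrict x : N) : Fin m → R) = f x from rfl, sub_self]
    · intro y hy
      refine ⟨y, trivial, ?_⟩
      have hzero : f.rangeRestrict y = 0 := Subtype.ext (by
        show f y = 0
        exact LinearMap.mem_ker.mp hy)
      show y - σ (f.rangeRestrict y) = y
      rw [hzero, map_zero, sub_zero]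
  rw [← hq]
  exact Submodule.FG.map q Module.Finite.fg_top

end Coherence

section CoreRight
variable (k A : Type u) [Field k] [Ring A] [Algebra k A]
variable (M : Type u) [AddCommGroup M] [Module k M] [Module Aᵐᵒᵖ M] [IsScalarTower k Aᵐᵒᵖ M]

/-- The right action of `A` on `M` as a `k`-bilinear map. -/
def actOpHom : A →ₗ[k] M →ₗ[k] M :=
  ((Algebra.lsmul k k M : Aᵐᵒᵖ →ₐ[k] Module.End k M).toLinearMap).comp
    (MulOpposite.opLinearEquiv k : A ≃ₗ[k] Aᵐᵒᵖ).toLinearMap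

@[simp] theorem actOpHom_apply (x : A) (m : M) : actOpHom k A M x m = op x • m := rfl

/-- The action map `A ⊗[k] M → M` for a right module, `Aᵐᵒᵖ`-linear. -/
def piR : A ⊗[k] M →ₗ[Aᵐᵒᵖ] M where
  toFun := TensorProduct.lift (actOpHom k A M)
  map_add' := map_add _
  map_smul' := by
    intro β t
    dsimp only [RingHom.id_apply]
    induction t using TensorProduct.induction_on with
    | zero => rw [smul_zero, map_zero, smul_zero]
    | tmul x m =>
        rw [smul_tmul']
        simp only [TensorProduct.lift.tmul, actOpHom_apply]
        have hsx : op (β • x) = β * op x := by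
          rw [← MulOpposite.op_unop β, op_smul_eq_mul, MulOpposite.op_mul, MulOpposite.op_unop]
        rw [hsx, mul_smul]
    | add x y hx hy => rw [smul_add, map_add, hx, hy, map_add, smul_add]

@[simp] theorem piR_tmul (x : A) (m : M) : piR k A M (x ⊗ₜ[k] m) = op x • m := by
  simp [piR]

theorem piR_surjective : Function.Surjective (piR k A M) := fun m =>
  ⟨1 ⊗ₜ[k] m, by simp⟩

/-- `m ↦ (x ⊗ y ↦ y ⊗ (op x • m))`, `k`-linear in `m`. -/
def LmapRHom : M →ₗ[k] (A ⊗[k] A →ₗ[k] A ⊗[k] M) :=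
  ((LinearMap.llcomp k (A ⊗[k] A) (M ⊗[k] A) (A ⊗[k] M))
      ((TensorProduct.comm k M A).toLinearMap)).comp
    ((LinearMap.rTensorHom A).comp (actOpHom k A M).flip)

@[simp] theorem LmapRHom_tmul (m : M) (x y : A) :
    LmapRHom k A M m (x ⊗ₜ[k] y) = y ⊗ₜ[k] (op x • m) := rfl

theorem LmapRHom_esmul (a b : A) (m : M) (w : A ⊗[k] A) :
    LmapRHom k A M m ((a ⊗ₜ[k] op b) • w) = (op b) • LmapRHom k A M (op a • m) w := by
  induction w using TensorProduct.induction_on with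
  | zero => rw [smul_zero, map_zero, map_zero, smul_zero]
  | tmul x y =>
      rw [esmul_tmul, LmapRHom_tmul, LmapRHom_tmul, smul_tmul']
      rw [op_smul_eq_mul, MulOpposite.op_mul, mul_smul]
  | add x y hx hy => rw [smul_add, map_add, map_add, hx, hy, smul_add]

theorem piR_LmapRHom (m : M) (w : A ⊗[k] A) :
    piR k A M (LmapRHom k A M m w) = op (LinearMap.mul' k A w) • m := by
  induction w using TensorProduct.induction_on with
  | zero => simp
  | tmul x y =>
      rw [LmapRHom_tmul, piR_tmul, LinearMap.mul'_apply, MulOpposite.op_mul, mul_smul]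
  | add x y hx hy =>
      rw [map_add, map_add, hx, hy,
        show LinearMap.mul' k A (x + y) = LinearMap.mul' k A x + LinearMap.mul' k A y from
          map_add _ x y, MulOpposite.op_add, add_smul]

theorem reprAM_smul_op (β : Aᵐᵒᵖ) (t : A ⊗[k] M) :
    reprAM k A M (β • t) = β • reprAM k A M t := by
  have key : ∀ f : (Module.Basis.ofVectorSpaceIndex k M) →₀ A,
      (reprAM k A M).symm (β • f) = β • (reprAM k A M).symm f := by
    intro f
    induction f using Finsupp.induction_linear with
    | zero => rw [smul_zero, map_zero, smul_zero]
    | add f g hf hg => rw [smul_add, map_add, map_add, hf, hg, smul_add]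
    | single j c =>
        rw [Finsupp.smul_single, reprAM_symm_single, reprAM_symm_single, smul_tmul']
  apply (reprAM k A M).symm.injective
  rw [LinearEquiv.symm_apply_apply, key, LinearEquiv.symm_apply_apply]

theorem reprAM_piR (t : A ⊗[k] M) :
    ((reprAM k A M t).sum fun j c => op c • (bM k M j : M)) = piR k A M t := by
  have key : ∀ f : (Module.Basis.ofVectorSpaceIndex k M) →₀ A,
      (f.sum fun j c => op c • (bM k M j : M)) = piR k A M ((reprAM k A M).symm f) := by
    intro f
    induction f using Finsupp.induction_linear with
    | zero => simp
    | add f g hf hg =>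
        rw [map_add, map_add, Finsupp.sum_add_index' (by intro j; simp)
          (by intro j c1 c2; rw [MulOpposite.op_add, add_smul]), hf, hg]
    | single j c =>
        rw [Finsupp.sum_single_index (a := j) (by simp), reprAM_symm_single, piR_tmul]
  rw [key, LinearEquiv.symm_apply_apply]

/-- Generators of the kernel of `piR`. -/
def genR (p : (↥(OmegaOne k A)) × (Module.Basis.ofVectorSpaceIndex k M)) : A ⊗[k] M :=
  LmapRHom k A M (bM k M p.2) p.1.val

def GtotR : (((↥(OmegaOne k A)) × (Module.Basis.ofVectorSpaceIndex k M)) →₀ Aᵐᵒᵖ) →ₗ[Aᵐᵒᵖ] A ⊗[k] M :=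
  Finsupp.linearCombination Aᵐᵒᵖ (genR k A M)

theorem GtotR_single (p) (β : Aᵐᵒᵖ) :
    GtotR k A M (Finsupp.single p β) = β • genR k A M p := by
  simp [GtotR]

def innerR (ω' : ↥(OmegaOne k A)) (x : A) (b : Aᵐᵒᵖ) :
    M →ₗ[k] (((↥(OmegaOne k A)) × (Module.Basis.ofVectorSpaceIndex k M)) →₀ Aᵐᵒᵖ) :=
  (((Finsupp.lsum k fun j => (Finsupp.lsingle (ω', j)).comp
      (LinearMap.toSpanSingleton k Aᵐᵒᵖ b)).comp
        ((bM k M).repr : M →ₗ[k] (Module.Basis.ofVectorSpaceIndex k M →₀ k)))).comp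
    (actOpHom k A M x)

theorem innerR_apply (ω' : ↥(OmegaOne k A)) (x : A) (b : Aᵐᵒᵖ) (m : M) :
    innerR k A M ω' x b m
      = ((bM k M).repr (op x • m)).sum fun j lam => Finsupp.single (ω', j) (lam • b) := by
  simp [innerR, Finsupp.lsum_apply]
  rfl

def PsiR (ω' : ↥(OmegaOne k A)) :
    (A ⊗[k] Aᵐᵒᵖ) →ₗ[k]
      (M →ₗ[k] (((↥(OmegaOne k A)) × (Module.Basis.ofVectorSpaceIndex k M)) →₀ Aᵐᵒᵖ)) :=
  TensorProduct.lift (LinearMap.mk₂ k (innerR k A M ω')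
    (by
      intro x1 x2 b; refine LinearMap.ext fun m => ?_
      simp only [innerR_apply, LinearMap.add_apply, MulOpposite.op_add, add_smul, map_add]
      rw [Finsupp.sum_add_index' (by intro j; rw [zero_smul, Finsupp.single_zero])
        (by intro j l1 l2; rw [add_smul, Finsupp.single_add])])
    (by
      intro c x b; refine LinearMap.ext fun m => ?_
      simp only [innerR_apply, LinearMap.smul_apply, MulOpposite.op_smul, smul_assoc, map_smul]
      rw [Finsupp.sum_smul_index' (by intro j; rw [zero_smul, Finsupp.single_zero]),
        Finsupp.smul_sum]
      exact Finsupp.sum_congr fun j _ => by rw [smul_assoc, Finsupp.smul_single])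
    (by
      intro x b1 b2; refine LinearMap.ext fun m => ?_
      simp only [innerR_apply, LinearMap.add_apply]
      rw [← Finsupp.sum_add]
      exact Finsupp.sum_congr fun j _ => by rw [smul_add, Finsupp.single_add])
    (by
      intro c x b; refine LinearMap.ext fun m => ?_
      simp only [innerR_apply, LinearMap.smul_apply]
      rw [Finsupp.smul_sum]
      exact Finsupp.sum_congr fun j _ => by rw [smul_comm, Finsupp.smul_single]))

theorem PsiR_tmul (ω' : ↥(OmegaOne k A)) (x : A) (b : Aᵐᵒᵖ) (m : M) :
    PsiR k A M ω' (x ⊗ₜ[k] b) m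
      = ((bM k M).repr (op x • m)).sum fun j lam => Finsupp.single (ω', j) (lam • b) := by
  rw [PsiR, TensorProduct.lift.tmul]
  exact innerR_apply k A M ω' x b m

theorem PsiR_mul_left (ω' : ↥(OmegaOne k A)) (β : Aᵐᵒᵖ) (e : A ⊗[k] Aᵐᵒᵖ) (m : M) :
    PsiR k A M ω' (((1 : A) ⊗ₜ[k] β) * e) m = β • PsiR k A M ω' e m := by
  induction e using TensorProduct.induction_on with
  | zero => rw [mul_zero, map_zero, LinearMap.zero_apply, smul_zero]
  | tmul x b =>
      rw [Algebra.TensorProduct.tmul_mul_tmul, one_mul, PsiR_tmul, PsiR_tmul, Finsupp.smul_sum]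
      exact Finsupp.sum_congr fun j _ => by
        rw [Finsupp.smul_single, smul_comm, smul_eq_mul]
  | add e1 e2 h1 h2 =>
      rw [mul_add, map_add, LinearMap.add_apply, h1, h2, map_add, LinearMap.add_apply, smul_add]

theorem PsiR_mul_right (ω' : ↥(OmegaOne k A)) (c : A) (e : A ⊗[k] Aᵐᵒᵖ) (m : M) :
    PsiR k A M ω' ((c ⊗ₜ[k] (1 : Aᵐᵒᵖ)) * e) m = PsiR k A M ω' e (op c • m) := by
  induction e using TensorProduct.induction_on with
  | zero => rw [mul_zero, map_zero, LinearMap.zero_apply, LinearMap.zero_apply]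
  | tmul x b =>
      rw [Algebra.TensorProduct.tmul_mul_tmul, one_mul, PsiR_tmul, PsiR_tmul]
      rw [show op (c * x) • m = op x • (op c • m) by
        rw [MulOpposite.op_mul, mul_smul]]
  | add e1 e2 h1 h2 =>
      rw [mul_add, map_add, LinearMap.add_apply, h1, h2, map_add, LinearMap.add_apply]

theorem GtotR_PsiR (ω' : ↥(OmegaOne k A)) (e : A ⊗[k] Aᵐᵒᵖ) (m : M) :
    GtotR k A M (PsiR k A M ω' e m) = LmapRHom k A M m (e • (ω' : A ⊗[k] A)) := by
  induction e using TensorProduct.induction_on with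
  | zero => rw [map_zero, LinearMap.zero_apply, map_zero, (bimoduleTensorModule k A A A).zero_smul, map_zero]
  | tmul x b =>
      rw [PsiR_tmul, map_finsuppSum]
      have expand : LmapRHom k A M (op x • m) (ω' : A ⊗[k] A)
          = ((bM k M).repr (op x • m)).sum
              fun j lam => lam • (LmapRHom k A M (bM k M j) (ω' : A ⊗[k] A)) := by
        conv_lhs => rw [← (bM k M).linearCombination_repr (op x • m),
          Finsupp.linearCombination_apply, map_finsuppSum]
        rw [LinearMap.finsupp_sum_apply]
        exact Finsupp.sum_congr fun j _ => by rw [map_smul, LinearMap.smul_apply]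
      have hb : (x ⊗ₜ[k] b) • (ω' : A ⊗[k] A) = (x ⊗ₜ[k] op (unop b)) • (ω' : A ⊗[k] A) := by
        rw [MulOpposite.op_unop]
      rw [hb, LmapRHom_esmul, MulOpposite.op_unop, expand, Finsupp.smul_sum]
      exact Finsupp.sum_congr fun j lam => by
        rw [GtotR_single, genR, smul_comm, smul_assoc]
  | add e1 e2 h1 h2 =>
      rw [map_add, LinearMap.add_apply, map_add, h1, h2, add_smul, map_add]

end CoreRight

section CoreRight2
variable (k A : Type u) [Field k] [Ring A] [Algebra k A]
variable (M : Type u) [AddCommGroup M] [Module k M] [Module Aᵐᵒᵖ M] [IsScalarTower k Aᵐᵒᵖ M]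
variable (s : (↥(OmegaOne k A)) →ₗ[A ⊗[k] Aᵐᵒᵖ] ((↥(OmegaOne k A)) →₀ A ⊗[k] Aᵐᵒᵖ))

def PhiR (ω : ↥(OmegaOne k A)) :
    M →ₗ[k] (((↥(OmegaOne k A)) × (Module.Basis.ofVectorSpaceIndex k M)) →₀ Aᵐᵒᵖ) :=
  (s ω).sum fun ω' e => PsiR k A M ω' e

theorem PhiR_zero : PhiR k A M s 0 = 0 := by
  rw [PhiR, map_zero, Finsupp.sum_zero_index]

theorem PhiR_add (ω1 ω2 : ↥(OmegaOne k A)) :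
    PhiR k A M s (ω1 + ω2) = PhiR k A M s ω1 + PhiR k A M s ω2 := by
  rw [PhiR, PhiR, PhiR, map_add,
    Finsupp.sum_add_index' (fun ω' => map_zero _) (fun ω' e1 e2 => map_add _ _ _)]

theorem PhiR_smul_left (β : Aᵐᵒᵖ) (ω : ↥(OmegaOne k A)) (m : M) :
    PhiR k A M s (((1 : A) ⊗ₜ[k] β) • ω) m = β • PhiR k A M s ω m := by
  rw [PhiR, PhiR, map_smul, LinearMap.finsupp_sum_apply, LinearMap.finsupp_sum_apply,
    Finsupp.sum_smul_index' (fun ω' => by rw [map_zero, LinearMap.zero_apply]),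
    Finsupp.smul_sum]
  exact Finsupp.sum_congr fun ω' _ => by rw [smul_eq_mul, PsiR_mul_left]

theorem PhiR_smul_right (c : A) (ω : ↥(OmegaOne k A)) (m : M) :
    PhiR k A M s ((c ⊗ₜ[k] (1 : Aᵐᵒᵖ)) • ω) m = PhiR k A M s ω (op c • m) := by
  rw [PhiR, PhiR, map_smul, LinearMap.finsupp_sum_apply, LinearMap.finsupp_sum_apply,
    Finsupp.sum_smul_index' (fun ω' => by rw [map_zero, LinearMap.zero_apply])]
  exact Finsupp.sum_congr fun ω' _ => by rw [smul_eq_mul, PsiR_mul_right]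

theorem PhiR_total
    (hs : Function.LeftInverse (Finsupp.linearCombination (A ⊗[k] Aᵐᵒᵖ) id) s)
    (ω : ↥(OmegaOne k A)) (m : M) :
    GtotR k A M (PhiR k A M s ω m) = LmapRHom k A M m (ω : A ⊗[k] A) := by
  rw [PhiR, LinearMap.finsupp_sum_apply, map_finsuppSum]
  have h1 : ((Finsupp.linearCombination (A ⊗[k] Aᵐᵒᵖ) id (s ω) : ↥(OmegaOne k A)) : A ⊗[k] A)
      = (s ω).sum fun ω' e => e • (ω' : A ⊗[k] A) := by
    rw [Finsupp.linearCombination_apply, Finsupp.sum, Finsupp.sum,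
      AddSubmonoidClass.coe_finset_sum]
    exact Finset.sum_congr rfl fun ω' _ => rfl
  calc (s ω).sum (fun ω' e => GtotR k A M (PsiR k A M ω' e m))
      = (s ω).sum fun ω' e => LmapRHom k A M m (e • (ω' : A ⊗[k] A)) :=
        Finsupp.sum_congr fun ω' _ => GtotR_PsiR k A M ω' _ m
    _ = LmapRHom k A M m ((s ω).sum fun ω' e => e • (ω' : A ⊗[k] A)) :=
        (map_finsuppSum _ _ _).symm
    _ = LmapRHom k A M m (ω : A ⊗[k] A) := by rw [← h1, hs ω]

theorem kerPiR_projective (hqf : QuasiFree k A) :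
    Module.Projective Aᵐᵒᵖ ↥(LinearMap.ker (piR k A M)) := by
  obtain ⟨s, hs⟩ := Module.projective_def.mp hqf
  have hGmem : ∀ f, GtotR k A M f ∈ LinearMap.ker (piR k A M) := by
    intro f
    rw [LinearMap.mem_ker, GtotR, Finsupp.linearCombination_apply, map_finsuppSum,
      Finsupp.sum]
    apply Finset.sum_eq_zero; intro p _
    rw [map_smul, genR, piR_LmapRHom, (mem_omegaOne' k A).mp p.1.2]
    rw [show op (0 : A) = (0 : Aᵐᵒᵖ) from rfl, zero_smul, smul_zero]
  have h0 : ∀ j : Module.Basis.ofVectorSpaceIndex k M,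
      (fun (j : Module.Basis.ofVectorSpaceIndex k M) (c : A) =>
        PhiR k A M s (omegaf k A c) (bM k M j)) j 0 = 0 := by
    intro j; dsimp only; rw [omegaf_zero, PhiR_zero, LinearMap.zero_apply]
  have hadd : ∀ (j : Module.Basis.ofVectorSpaceIndex k M) (c1 c2 : A),
      PhiR k A M s (omegaf k A (c1 + c2)) (bM k M j)
        = PhiR k A M s (omegaf k A c1) (bM k M j) + PhiR k A M s (omegaf k A c2) (bM k M j) := by
    intro j c1 c2; rw [omegaf_add, PhiR_add, LinearMap.add_apply]
  set Kr := LinearMap.ker (piR k A M) with hKr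
  let cfun : ↥Kr → (((↥(OmegaOne k A)) × (Module.Basis.ofVectorSpaceIndex k M)) →₀ Aᵐᵒᵖ) :=
    fun x => (reprAM k A M x.val).sum fun j c => PhiR k A M s (omegaf k A c) (bM k M j)
  have hsplit : ∀ x : ↥Kr, GtotR k A M (cfun x) = - x.val := by
    intro x
    have hx0 : piR k A M x.val = 0 := LinearMap.mem_ker.mp x.2
    calc GtotR k A M (cfun x)
        = (reprAM k A M x.val).sum
            fun j c => GtotR k A M (PhiR k A M s (omegaf k A c) (bM k M j)) :=
          map_finsuppSum _ _ _
      _ = (reprAM k A M x.val).sum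
            fun j c => (1 : A) ⊗ₜ[k] (op c • (bM k M j : M)) - c ⊗ₜ[k] (bM k M j : M) := by
          refine Finsupp.sum_congr fun j _ => ?_
          rw [PhiR_total k A M s hs, omegaf_val, map_sub, LmapRHom_tmul, LmapRHom_tmul]
          rw [show op (1 : A) = (1 : Aᵐᵒᵖ) from rfl, one_smul]
      _ = ((reprAM k A M x.val).sum fun j c => (1 : A) ⊗ₜ[k] (op c • (bM k M j : M)))
          - ((reprAM k A M x.val).sum fun j c => c ⊗ₜ[k] (bM k M j : M)) :=
          Finsupp.sum_sub
      _ = (TensorProduct.mk k A M 1)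
            ((reprAM k A M x.val).sum fun j c => op c • (bM k M j : M)) - x.val := by
          rw [reprAM_reconstruct, map_finsuppSum]
          rfl
      _ = - x.val := by rw [reprAM_piR, hx0, map_zero, zero_sub]
  have csmul : ∀ (β : Aᵐᵒᵖ) (x : ↥Kr), cfun (β • x) = β • cfun x := by
    intro β x
    have hx0 : piR k A M x.val = 0 := LinearMap.mem_ker.mp x.2
    have hrw : cfun (β • x) = (reprAM k A M (β • x.val)).sum
        fun j c => PhiR k A M s (omegaf k A c) (bM k M j) := rfl
    rw [hrw, reprAM_smul_op, Finsupp.sum_smul_index' h0]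
    have step : ∀ (j : Module.Basis.ofVectorSpaceIndex k M) (c : A),
        PhiR k A M s (omegaf k A (β • c)) (bM k M j)
          = PhiR k A M s (omegaf k A (unop β)) (op c • (bM k M j : M))
            + β • PhiR k A M s (omegaf k A c) (bM k M j) := by
      intro j c
      have hbc : β • c = c * unop β := by
        rw [← MulOpposite.op_unop β, op_smul_eq_mul, MulOpposite.op_unop]
      rw [hbc, omegaf_leibniz', PhiR_add, LinearMap.add_apply, PhiR_smul_right]
      rw [show op (unop β) = β from MulOpposite.op_unop β, PhiR_smul_left]
    have hcongr : (reprAM k A M x.val).sum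
        (fun j c => PhiR k A M s (omegaf k A (β • c)) (bM k M j))
        = (reprAM k A M x.val).sum (fun j c =>
            PhiR k A M s (omegaf k A (unop β)) (op c • (bM k M j : M))
              + β • PhiR k A M s (omegaf k A c) (bM k M j)) :=
      Finsupp.sum_congr fun j _ => step j _
    rw [hcongr, Finsupp.sum_add]
    have last : ((reprAM k A M x.val).sum
        fun j c => PhiR k A M s (omegaf k A (unop β)) (op c • (bM k M j : M))) = 0 := by
      rw [← map_finsuppSum (PhiR k A M s (omegaf k A (unop β))), reprAM_piR, hx0, map_zero]
    rw [last, zero_add, ← Finsupp.smul_sum]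
  let cmap : ↥Kr →ₗ[Aᵐᵒᵖ] (((↥(OmegaOne k A)) × (Module.Basis.ofVectorSpaceIndex k M)) →₀ Aᵐᵒᵖ) :=
    { toFun := cfun
      map_add' := by
        intro x y
        have hrw : cfun (x + y) = (reprAM k A M (x.val + y.val)).sum
            fun j c => PhiR k A M s (omegaf k A c) (bM k M j) := rfl
        rw [hrw, map_add, Finsupp.sum_add_index' h0 hadd]
      map_smul' := csmul }
  refine Module.Projective.of_split (-cmap) ((GtotR k A M).codRestrict Kr hGmem) ?_
  refine LinearMap.ext fun x => Subtype.ext ?_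
  rw [LinearMap.comp_apply, LinearMap.codRestrict_apply, LinearMap.id_apply]
  rw [LinearMap.neg_apply, map_neg]
  rw [show (GtotR k A M) (cmap x) = - x.val from hsplit x, neg_neg]

theorem tensorRight_projective : Module.Projective Aᵐᵒᵖ (A ⊗[k] M) := by
  have hmr : ∀ (β : Aᵐᵒᵖ) (f : (Module.Basis.ofVectorSpaceIndex k M) →₀ A),
      Finsupp.mapRange (MulOpposite.op) rfl (β • f)
        = β • Finsupp.mapRange (MulOpposite.op) rfl f := by
    intro β f
    ext j
    rw [Finsupp.mapRange_apply, Finsupp.smul_apply, Finsupp.smul_apply, Finsupp.mapRange_apply]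
    rw [← MulOpposite.op_unop β, op_smul_eq_mul, MulOpposite.op_mul, MulOpposite.op_unop]
    rw [smul_eq_mul]
  have e : (A ⊗[k] M) ≃ₗ[Aᵐᵒᵖ] ((Module.Basis.ofVectorSpaceIndex k M) →₀ Aᵐᵒᵖ) :=
    { toFun := fun t => Finsupp.mapRange (MulOpposite.op) rfl (reprAM k A M t)
      map_add' := by
        intro t1 t2
        rw [map_add]
        ext j
        simp [Finsupp.mapRange_apply]
      map_smul' := by
        intro β t
        dsimp only [RingHom.id_apply]
        rw [reprAM_smul_op, hmr]
      invFun := fun f => (reprAM k A M).symm (Finsupp.mapRange (MulOpposite.unop) rfl f)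
      left_inv := by
        intro t
        dsimp only
        have h2 : Finsupp.mapRange (MulOpposite.unop) rfl
            (Finsupp.mapRange (MulOpposite.op) rfl (reprAM k A M t)) = reprAM k A M t := by
          ext j; simp [Finsupp.mapRange_apply]
        rw [h2, LinearEquiv.symm_apply_apply]
      right_inv := by
        intro f
        dsimp only
        rw [LinearEquiv.apply_symm_apply]
        ext j; simp [Finsupp.mapRange_apply] }
  exact Module.Projective.of_equiv e.symm

end CoreRight2

/-- A quasi-free algebra over a field is left and right coherent. -/
theorem coherence_of_quasiFree_over_field (k A : Type u) [Field k] [Ring A] [Algebra k A]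
    (hqf : QuasiFree k A) :
    LeftCoherent A ∧ LeftCoherent Aᵐᵒᵖ := by
  constructor
  · apply leftCoherent_of_resolutions A
    intro m N
    exact ⟨A ⊗[k] ((Fin m → A) ⧸ N), inferInstance, inferInstance,
      piM k A ((Fin m → A) ⧸ N), tensorLeft_projective k A _, piM_surjective k A _,
      kerPiM_projective k A _ hqf⟩
  · apply leftCoherent_of_resolutions Aᵐᵒᵖ
    intro m N
    exact ⟨A ⊗[k] ((Fin m → Aᵐᵒᵖ) ⧸ N), inferInstance, inferInstance,
      piR k A ((Fin m → Aᵐᵒᵖ) ⧸ N), tensorRight_projective k A _, piR_surjective k A _,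
      kerPiR_projective k A _ hqf⟩

end
end

section
/- A ring A is left noetherian if and only if for every left A-module M and every family (F_i)_{i∈I} of flat right A-modules the canonical morphism (∏_{i∈I} F_i) ⊗_A M → ∏_{i∈I} (F_i ⊗_A M) is injective; moreover these conditions are equivalent to the same injectivity statement for the family of card(A) copies of the rank one free right module A. -/
open TensorProduct MulOpposite CategoryTheory

universe u v w x

set_option linter.unusedSectionVars false
set_option linter.unusedVariables false

noncomputable section

section BalTensor
variable (A : Type u) [Ring A]
variable (N : Type v) [AddCommGroup N] [Module Aᵐᵒᵖ N]
variable (M : Type w) [AddCommGroup M] [Module A M]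

/-- The relations defining the balanced tensor product `N ⊗_A M` of a right `A`-module `N`
and a left `A`-module `M`. -/
def balRels : Submodule ℤ (N ⊗[ℤ] M) :=
  Submodule.span ℤ
    {x | ∃ (a : A) (n : N) (m : M), x = ((op a) • n) ⊗ₜ[ℤ] m - n ⊗ₜ[ℤ] (a • m)}

/-- The balanced tensor product `N ⊗_A M` of a right `A`-module `N` and a left `A`-module `M`,
defined as the quotient of `N ⊗[ℤ] M` by the submodule of balancing relations. -/
abbrev BalTensor := (N ⊗[ℤ] M) ⧸ balRels A N M

variable {M}

/-- The functorial map `N ⊗_A M → N ⊗_A M'` induced by an `A`-linear map `M → M'`. -/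
def balMap {M' : Type x} [AddCommGroup M'] [Module A M'] (f : M →ₗ[A] M') :
    BalTensor A N M →ₗ[ℤ] BalTensor A N M' :=
  Submodule.mapQ (balRels A N M) (balRels A N M')
    (LinearMap.lTensor N f.toAddMonoidHom.toIntLinearMap)
    (by
      rw [balRels, Submodule.span_le]
      rintro x ⟨a, n, m, rfl⟩
      have h : (op a • n) ⊗ₜ[ℤ] f m - n ⊗ₜ[ℤ] (a • f m) ∈ balRels A N M' :=
        Submodule.subset_span ⟨a, n, f m, rfl⟩
      refine Submodule.mem_comap.mpr ?_
      convert h using 1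
      show (LinearMap.lTensor N f.toAddMonoidHom.toIntLinearMap) ((op a • n) ⊗ₜ[ℤ] m - n ⊗ₜ[ℤ] (a • m)) = _
      simp)

variable {N} (M)

/-- The functorial map `N ⊗_A M → N' ⊗_A M` induced by a map `N → N'` of right `A`-modules. -/
def balMapLeft {N' : Type x} [AddCommGroup N'] [Module Aᵐᵒᵖ N'] (g : N →ₗ[Aᵐᵒᵖ] N') :
    BalTensor A N M →ₗ[ℤ] BalTensor A N' M :=
  Submodule.mapQ (balRels A N M) (balRels A N' M)
    (LinearMap.rTensor M g.toAddMonoidHom.toIntLinearMap)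
    (by
      rw [balRels, Submodule.span_le]
      rintro x ⟨a, n, m, rfl⟩
      have h : (op a • g n) ⊗ₜ[ℤ] m - g n ⊗ₜ[ℤ] (a • m) ∈ balRels A N' M :=
        Submodule.subset_span ⟨a, g n, m, rfl⟩
      refine Submodule.mem_comap.mpr ?_
      convert h using 1
      show (LinearMap.rTensor M g.toAddMonoidHom.toIntLinearMap) ((op a • n) ⊗ₜ[ℤ] m - n ⊗ₜ[ℤ] (a • m)) = _
      simp)

variable (N)

/-- A right `A`-module `N` is *flat* if the functor `N ⊗_A (−)` is exact on left `A`-modules. -/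
def RightFlat : Prop :=
  ∀ (M₁ M₂ M₃ : Type u) [AddCommGroup M₁] [Module A M₁] [AddCommGroup M₂] [Module A M₂]
    [AddCommGroup M₃] [Module A M₃] (f : M₁ →ₗ[A] M₂) (g : M₂ →ₗ[A] M₃),
    Function.Exact f g → Function.Exact (balMap A N f) (balMap A N g)

/-- The canonical comparison map `(∏ᵢ Fᵢ) ⊗_A M → ∏ᵢ (Fᵢ ⊗_A M)` induced by the
projections `∏ᵢ Fᵢ → Fᵢ`. -/
def balPiCompare {I : Type x} (F : I → Type v) [∀ i, AddCommGroup (F i)]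
    [∀ i, Module Aᵐᵒᵖ (F i)] :
    BalTensor A (∀ i, F i) M →ₗ[ℤ] ∀ i, BalTensor A (F i) M :=
  LinearMap.pi fun i => balMapLeft A M (LinearMap.proj i : (∀ j, F j) →ₗ[Aᵐᵒᵖ] F i)

end BalTensor


section Lemmas

variable {A : Type u} [Ring A]
variable {N : Type v} [AddCommGroup N] [Module Aᵐᵒᵖ N]
variable {M : Type w} [AddCommGroup M] [Module A M]

lemma balMap_mk_tmul {M' : Type x} [AddCommGroup M'] [Module A M'] (f : M →ₗ[A] M')
    (n : N) (m : M) :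
    balMap A N f (Submodule.Quotient.mk (n ⊗ₜ[ℤ] m)) =
      (Submodule.Quotient.mk (n ⊗ₜ[ℤ] f m) : BalTensor A N M') := by
  rw [balMap]
  erw [Submodule.mapQ_apply, LinearMap.lTensor_tmul]
  rfl

lemma balMapLeft_mk_tmul {N' : Type x} [AddCommGroup N'] [Module Aᵐᵒᵖ N'] (g : N →ₗ[Aᵐᵒᵖ] N')
    (n : N) (m : M) :
    balMapLeft A M g (Submodule.Quotient.mk (n ⊗ₜ[ℤ] m)) =
      (Submodule.Quotient.mk (g n ⊗ₜ[ℤ] m) : BalTensor A N' M) := by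
  rw [balMapLeft]
  erw [Submodule.mapQ_apply, LinearMap.rTensor_tmul]
  rfl

lemma mk_smul_tmul (a : A) (n : N) (m : M) :
    (Submodule.Quotient.mk ((op a • n) ⊗ₜ[ℤ] m) : BalTensor A N M) =
      Submodule.Quotient.mk (n ⊗ₜ[ℤ] (a • m)) := by
  rw [Submodule.Quotient.eq]
  exact Submodule.subset_span ⟨a, n, m, rfl⟩

lemma balPiCompare_apply {I : Type x} (F : I → Type v) [∀ i, AddCommGroup (F i)]
    [∀ i, Module Aᵐᵒᵖ (F i)] (x : BalTensor A (∀ i, F i) M) (i : I) :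
    balPiCompare A M F x i = balMapLeft A M (LinearMap.proj i : (∀ j, F j) →ₗ[Aᵐᵒᵖ] F i) x :=
  rfl

lemma balMap_balMapLeft_comm {M' : Type*} [AddCommGroup M'] [Module A M']
    {N' : Type*} [AddCommGroup N'] [Module Aᵐᵒᵖ N'] (f : M →ₗ[A] M') (g : N →ₗ[Aᵐᵒᵖ] N')
    (t : BalTensor A N M) :
    balMapLeft A M' g (balMap A N f t) = balMap A N' f (balMapLeft A M g t) := by
  have : ((balMapLeft A M' g).comp (balMap A N f)) = ((balMap A N' f).comp (balMapLeft A M g)) := by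
    apply Submodule.linearMap_qext
    apply TensorProduct.ext'
    intro n m
    erw [LinearMap.comp_apply, LinearMap.comp_apply]
  exact LinearMap.congr_fun this t

lemma balMap_surjective {M' : Type x} [AddCommGroup M'] [Module A M'] (f : M →ₗ[A] M')
    (hf : Function.Surjective f) : Function.Surjective (balMap A N f) := by
  intro x
  obtain ⟨t, rfl⟩ := Submodule.Quotient.mk_surjective _ x
  induction t using TensorProduct.induction_on with
  | zero => exact ⟨0, by simp⟩
  | tmul n m =>
    obtain ⟨m', rfl⟩ := hf m
    exact ⟨Submodule.Quotient.mk (n ⊗ₜ[ℤ] m'), balMap_mk_tmul f n m'⟩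
  | add s t hs ht =>
    obtain ⟨xs, hxs⟩ := hs
    obtain ⟨xt, hxt⟩ := ht
    exact ⟨xs + xt, by rw [map_add, hxs, hxt, Submodule.Quotient.mk_add]⟩

lemma balMap_comp_eq_zero {M₂ : Type*} {M₃ : Type*} [AddCommGroup M₂] [Module A M₂]
    [AddCommGroup M₃] [Module A M₃] (f : M →ₗ[A] M₂) (g : M₂ →ₗ[A] M₃)
    (h : ∀ m, g (f m) = 0) (t : BalTensor A N M) :
    balMap A N g (balMap A N f t) = 0 := by
  have : ((balMap A N g).comp (balMap A N f)) = 0 := by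
    apply Submodule.linearMap_qext
    apply TensorProduct.ext'
    intro n m
    show balMap A N g (balMap A N f (Submodule.Quotient.mk (n ⊗ₜ[ℤ] m))) = 0
    rw [balMap_mk_tmul, balMap_mk_tmul]
    simp [Submodule.mkQ_apply, balMap_mk_tmul, h m]
  exact LinearMap.congr_fun this t

lemma balMap_zero {M' : Type x} [AddCommGroup M'] [Module A M'] :
    balMap A N (0 : M →ₗ[A] M') = 0 := by
  apply Submodule.linearMap_qext
  apply TensorProduct.ext'
  intro n m
  show balMap A N (0 : M →ₗ[A] M') (Submodule.Quotient.mk (n ⊗ₜ[ℤ] m)) = 0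
  rw [balMap_mk_tmul]
  simp [Submodule.mkQ_apply, balMap_mk_tmul]

end Lemmas
section Lemmas2

variable {A : Type u} [Ring A]
variable {N : Type v} [AddCommGroup N] [Module Aᵐᵒᵖ N]

lemma balMap_exact {M₁ : Type*} {M₂ : Type*} {M₃ : Type*} [AddCommGroup M₁] [Module A M₁]
    [AddCommGroup M₂] [Module A M₂] [AddCommGroup M₃] [Module A M₃]
    (f : M₁ →ₗ[A] M₂) (g : M₂ →ₗ[A] M₃) (hfg : Function.Exact f g)
    (hg : Function.Surjective g) :
    Function.Exact (balMap A N f) (balMap A N g) := by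
  rw [LinearMap.exact_iff]
  apply le_antisymm
  · -- ker ⊆ range
    intro x hx
    rw [LinearMap.mem_ker] at hx
    obtain ⟨t, rfl⟩ := Submodule.Quotient.mk_surjective _ x
    rw [balMap] at hx
    erw [Submodule.mapQ_apply, Submodule.Quotient.mk_eq_zero] at hx
    -- balRels A N M₃ ≤ map (lTensor N g') (balRels A N M₂)
    have hsub : balRels A N M₃ ≤
        Submodule.map (LinearMap.lTensor N g.toAddMonoidHom.toIntLinearMap) (balRels A N M₂) := by
      rw [balRels]
      refine Submodule.span_le.mpr ?_
      rintro _ ⟨a, n, m₃, rfl⟩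
      obtain ⟨m₂, rfl⟩ := hg m₃
      refine ⟨(op a • n) ⊗ₜ[ℤ] m₂ - n ⊗ₜ[ℤ] (a • m₂),
        Submodule.subset_span ⟨a, n, m₂, rfl⟩, ?_⟩
      simp only [map_sub, LinearMap.lTensor_tmul]
      have : g.toAddMonoidHom.toIntLinearMap (a • m₂) = a • g m₂ := by
        simp [LinearMap.map_smul]
      rw [this]
      rfl
    obtain ⟨r, hr, hrt⟩ := hsub hx
    have hker : LinearMap.lTensor N g.toAddMonoidHom.toIntLinearMap (t - r) = 0 := by
      rw [map_sub, hrt]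
      exact sub_self _
    have hex : Function.Exact (LinearMap.lTensor N f.toAddMonoidHom.toIntLinearMap)
        (LinearMap.lTensor N g.toAddMonoidHom.toIntLinearMap) := by
      apply lTensor_exact N (f := f.toAddMonoidHom.toIntLinearMap)
        (g := g.toAddMonoidHom.toIntLinearMap)
      · exact hfg
      · exact hg
    obtain ⟨s, hs⟩ := (hex (t - r)).mp hker
    refine ⟨Submodule.Quotient.mk s, ?_⟩
    rw [balMap]
    erw [Submodule.mapQ_apply, hs]
    rw [show (Submodule.Quotient.mk (t - r) : BalTensor A N M₂) = Submodule.Quotient.mk t from ?_]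
    · rw [Submodule.Quotient.eq]
      simpa using Submodule.neg_mem _ hr
  · rintro _ ⟨y, rfl⟩
    rw [LinearMap.mem_ker]
    exact balMap_comp_eq_zero f g (fun m => hfg.apply_apply_eq_zero m) y

end Lemmas2
section Lemmas3

variable (A : Type u) [Ring A]
variable (N : Type v) [AddCommGroup N] [Module Aᵐᵒᵖ N]

/-- The canonical map `N ⊗_A A^k → N^k`. -/
def balFree (k : ℕ) : BalTensor A N (Fin k → A) →ₗ[ℤ] (Fin k → N) :=
  Submodule.liftQ _
    (TensorProduct.lift (LinearMap.mk₂ ℤ (fun n m j => op (m j) • n)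
      (fun n n' m => by funext j; simp [smul_add])
      (fun c n m => by
        funext j
        show op (m j) • (c • n) = c • (op (m j) • n)
        exact (smul_comm c (op (m j)) n).symm)
      (fun n m m' => by funext j; simp [add_smul])
      (fun c n m => by
        funext j
        show op ((c • m) j) • n = c • (op (m j) • n)
        rw [Pi.smul_apply, show op (c • m j) = c • op (m j) from rfl, smul_assoc])))
    (by
      rw [balRels, Submodule.span_le]
      rintro _ ⟨a, n, m, rfl⟩
      simp only [SetLike.mem_coe, LinearMap.mem_ker, map_sub, TensorProduct.lift.tmul,
        LinearMap.mk₂_apply]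
      erw [LinearMap.mem_ker, map_sub, TensorProduct.lift.tmul, TensorProduct.lift.tmul]
      funext j
      show op (m j) • (op a • n) - op ((a • m) j) • n = (0 : Fin k → N) j
      rw [Pi.smul_apply, smul_eq_mul, show op (a * m j) = op (m j) * op a from rfl, mul_smul]
      simp)

lemma balFree_mk_tmul (k : ℕ) (n : N) (m : Fin k → A) :
    balFree A N k (Submodule.Quotient.mk (n ⊗ₜ[ℤ] m)) = fun j => op (m j) • n := by
  rw [balFree]
  erw [Submodule.liftQ_apply, TensorProduct.lift.tmul]
  rfl

/-- The canonical map `N^k → N ⊗_A A^k`. -/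
def freeBal (k : ℕ) : (Fin k → N) →ₗ[ℤ] BalTensor A N (Fin k → A) :=
  ∑ j : Fin k, ((balRels A N (Fin k → A)).mkQ.comp
    ((TensorProduct.mk ℤ N (Fin k → A)).flip (Pi.single j 1))).comp (LinearMap.proj j)

lemma freeBal_apply (k : ℕ) (v : Fin k → N) :
    freeBal A N k v = ∑ j : Fin k, (Submodule.Quotient.mk (v j ⊗ₜ[ℤ] Pi.single j 1)
      : BalTensor A N (Fin k → A)) := by
  rw [freeBal, LinearMap.sum_apply]
  rfl

lemma freeBal_balFree (k : ℕ) (x : BalTensor A N (Fin k → A)) :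
    freeBal A N k (balFree A N k x) = x := by
  have key : (freeBal A N k).comp (balFree A N k) = LinearMap.id := by
    apply Submodule.linearMap_qext
    apply TensorProduct.ext'
    intro n m
    show freeBal A N k (balFree A N k (Submodule.Quotient.mk (n ⊗ₜ[ℤ] m)))
      = Submodule.Quotient.mk (n ⊗ₜ[ℤ] m)
    rw [balFree_mk_tmul, freeBal_apply]
    have h1 : ∀ j : Fin k, (Submodule.Quotient.mk ((op (m j) • n) ⊗ₜ[ℤ] Pi.single j 1)
        : BalTensor A N (Fin k → A)) = Submodule.Quotient.mk (n ⊗ₜ[ℤ] Pi.single j (m j)) := by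
      intro j
      rw [mk_smul_tmul]
      congr 1
      rw [← Pi.single_smul, smul_eq_mul, mul_one]
    rw [Finset.sum_congr rfl (fun j _ => h1 j)]
    simp only [← Submodule.mkQ_apply, ← map_sum, ← TensorProduct.tmul_sum,
      Finset.univ_sum_single]
  exact LinearMap.congr_fun key x

lemma balFree_freeBal (k : ℕ) (v : Fin k → N) :
    balFree A N k (freeBal A N k v) = v := by
  rw [freeBal_apply, map_sum]
  funext l
  simp only [Finset.sum_apply, balFree_mk_tmul]
  rw [Finset.sum_eq_single l]
  · simp
  · intro j _ hj
    rw [Pi.single_eq_of_ne (Ne.symm hj)]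
    simp
  · simp

end Lemmas3
section Lemmas4

variable {A : Type u} [Ring A]

lemma balMapLeft_freeBal {N : Type v} [AddCommGroup N] [Module Aᵐᵒᵖ N]
    {N' : Type*} [AddCommGroup N'] [Module Aᵐᵒᵖ N'] (g : N →ₗ[Aᵐᵒᵖ] N')
    (k : ℕ) (v : Fin k → N) :
    balMapLeft A (Fin k → A) g (freeBal A N k v) = freeBal A N' k (fun j => g (v j)) := by
  rw [freeBal_apply, map_sum, freeBal_apply]
  exact Finset.sum_congr rfl fun j _ => balMapLeft_mk_tmul g (v j) (Pi.single j 1)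

lemma balFree_balMapLeft {N : Type v} [AddCommGroup N] [Module Aᵐᵒᵖ N]
    {N' : Type*} [AddCommGroup N'] [Module Aᵐᵒᵖ N'] (g : N →ₗ[Aᵐᵒᵖ] N')
    (k : ℕ) (t : BalTensor A N (Fin k → A)) :
    balFree A N' k (balMapLeft A (Fin k → A) g t) = fun j => g (balFree A N k t j) := by
  have key : (balFree A N' k).comp (balMapLeft A (Fin k → A) g)
      = (LinearMap.compLeft g.toAddMonoidHom.toIntLinearMap (Fin k)).comp (balFree A N k) := by
    apply Submodule.linearMap_qext
    apply TensorProduct.ext'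
    intro n m
    show balFree A N' k (balMapLeft A (Fin k → A) g (Submodule.Quotient.mk (n ⊗ₜ[ℤ] m)))
      = (LinearMap.compLeft g.toAddMonoidHom.toIntLinearMap (Fin k))
          (balFree A N k (Submodule.Quotient.mk (n ⊗ₜ[ℤ] m)))
    rw [balMapLeft_mk_tmul, balFree_mk_tmul, balFree_mk_tmul]
    funext j
    simp [LinearMap.compLeft, LinearMap.map_smul]
  funext j
  have h := congrFun (LinearMap.congr_fun key t) j
  simpa [LinearMap.compLeft] using h

lemma balPiCompare_free_bijective (k : ℕ) {I : Type x} (F : I → Type v)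
    [∀ i, AddCommGroup (F i)] [∀ i, Module Aᵐᵒᵖ (F i)] :
    Function.Bijective (balPiCompare A (Fin k → A) F) := by
  rw [Function.bijective_iff_has_inverse]
  refine ⟨fun y => freeBal A (∀ i, F i) k (fun j i => balFree A (F i) k (y i) j), ?_, ?_⟩
  · intro x
    show freeBal A (∀ i, F i) k
      (fun j i => balFree A (F i) k (balPiCompare A (Fin k → A) F x i) j) = x
    have h2 : (fun j i => balFree A (F i) k (balPiCompare A (Fin k → A) F x i) j)
        = balFree A (∀ i, F i) k x := by
      funext j i
      have h1 : balFree A (F i) k (balPiCompare A (Fin k → A) F x i)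
          = fun j => (balFree A (∀ i, F i) k x j) i := by
        rw [balPiCompare_apply, balFree_balMapLeft]
        rfl
      rw [h1]
    rw [h2]
    exact freeBal_balFree A _ k x
  · intro y
    funext i
    show balPiCompare A (Fin k → A) F
      (freeBal A (∀ i, F i) k (fun j i => balFree A (F i) k (y i) j)) i = y i
    rw [balPiCompare_apply, balMapLeft_freeBal]
    have h3 : (fun j => (LinearMap.proj i : (∀ l, F l) →ₗ[Aᵐᵒᵖ] F i)
        ((fun j' i' => balFree A (F i') k (y i') j') j)) = balFree A (F i) k (y i) := by
      funext j; rfl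
    rw [h3]
    exact freeBal_balFree A _ k (y i)

lemma balPiCompare_fp_injective {I : Type x} (F : I → Type v)
    [∀ i, AddCommGroup (F i)] [∀ i, Module Aᵐᵒᵖ (F i)]
    {k n : ℕ} {M' : Type w} [AddCommGroup M'] [Module A M']
    (f : (Fin n → A) →ₗ[A] (Fin k → A)) (g : (Fin k → A) →ₗ[A] M')
    (hfg : Function.Exact f g) (hg : Function.Surjective g) :
    Function.Injective (balPiCompare A M' F) := by
  rw [← LinearMap.ker_eq_bot, LinearMap.ker_eq_bot']
  intro x hx
  obtain ⟨y, rfl⟩ := balMap_surjective (N := ∀ i, F i) g hg x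
  have hcy : ∀ i, balMap A (F i) g (balPiCompare A (Fin k → A) F y i) = 0 := by
    intro i
    rw [balPiCompare_apply, ← balMap_balMapLeft_comm]
    exact congrFun hx i
  have hz : ∀ i, ∃ z, balMap A (F i) f z = balPiCompare A (Fin k → A) F y i := by
    intro i
    have hex := balMap_exact (N := F i) f g hfg hg
    rw [LinearMap.exact_iff] at hex
    have hk : balPiCompare A (Fin k → A) F y i ∈ LinearMap.ker (balMap A (F i) g) :=
      LinearMap.mem_ker.mpr (hcy i)
    rw [hex] at hk
    exact LinearMap.mem_range.mp hk
  choose z hzeq using hz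
  obtain ⟨w, hw⟩ := (balPiCompare_free_bijective n F).surjective z
  have hcw : balPiCompare A (Fin k → A) F (balMap A (∀ i, F i) f w)
      = balPiCompare A (Fin k → A) F y := by
    funext i
    rw [balPiCompare_apply, balMap_balMapLeft_comm]
    have : balMapLeft A (Fin n → A) (LinearMap.proj i : (∀ l, F l) →ₗ[Aᵐᵒᵖ] F i) w = z i :=
      congrFun hw i
    rw [this, hzeq i]
  have hwy : balMap A (∀ i, F i) f w = y := (balPiCompare_free_bijective k F).injective hcw
  rw [← hwy]
  exact balMap_comp_eq_zero f g (fun m => hfg.apply_apply_eq_zero m) w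

end Lemmas4
section Lemmas5

variable {A : Type u} [Ring A]

lemma RightFlat.balMap_injective {N : Type v} [AddCommGroup N] [Module Aᵐᵒᵖ N]
    (hN : RightFlat A N) {M₁ M₂ : Type u} [AddCommGroup M₁] [Module A M₁]
    [AddCommGroup M₂] [Module A M₂] (f : M₁ →ₗ[A] M₂) (hf : Function.Injective f) :
    Function.Injective (balMap A N f) := by
  have h0 : Function.Exact (0 : PUnit.{u+1} →ₗ[A] M₁) f := by
    rw [LinearMap.exact_iff, LinearMap.range_zero]
    exact LinearMap.ker_eq_bot.mpr hf
  have hex := hN PUnit.{u+1} M₁ M₂ 0 f h0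
  rw [LinearMap.exact_iff, balMap_zero, LinearMap.range_zero] at hex
  exact LinearMap.ker_eq_bot.mp hex

/-- The canonical map `A ⊗_A M → M`. -/
def balA (A : Type u) [Ring A] (M : Type w) [AddCommGroup M] [Module A M] : BalTensor A A M →ₗ[ℤ] M :=
  Submodule.liftQ _
    (TensorProduct.lift (LinearMap.mk₂ ℤ (fun (a : A) (m : M) => a • m)
      (fun a a' m => add_smul a a' m)
      (fun c a m => smul_assoc c a m)
      (fun a m m' => smul_add a m m')
      (fun c a m => (smul_comm c a m).symm)))
    (by
      rw [balRels, Submodule.span_le]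
      rintro _ ⟨a, b, m, rfl⟩
      simp only [SetLike.mem_coe, LinearMap.mem_ker, map_sub, TensorProduct.lift.tmul,
        LinearMap.mk₂_apply]
      erw [LinearMap.mem_ker, map_sub, TensorProduct.lift.tmul, TensorProduct.lift.tmul,
        LinearMap.mk₂_apply, LinearMap.mk₂_apply]
      rw [show (op a • b : A) = b * a from rfl, mul_smul]
      simp)

lemma balA_mk_tmul (M : Type w) [AddCommGroup M] [Module A M] (a : A) (m : M) :
    balA A M (Submodule.Quotient.mk (a ⊗ₜ[ℤ] m)) = a • m := by
  rw [balA]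
  erw [Submodule.liftQ_apply, TensorProduct.lift.tmul]
  rfl

/-- The canonical map `M → A ⊗_A M`. -/
def Abal (A : Type u) [Ring A] (M : Type w) [AddCommGroup M] [Module A M] : M →ₗ[ℤ] BalTensor A A M :=
  (balRels A A M).mkQ.comp ((TensorProduct.mk ℤ A M) 1)

lemma Abal_apply (M : Type w) [AddCommGroup M] [Module A M] (m : M) :
    Abal A M m = Submodule.Quotient.mk ((1 : A) ⊗ₜ[ℤ] m) := rfl

lemma balA_balMap {M : Type w} [AddCommGroup M] [Module A M]
    {M' : Type x} [AddCommGroup M'] [Module A M'] (f : M →ₗ[A] M') (t : BalTensor A A M) :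
    balA A M' (balMap A A f t) = f (balA A M t) := by
  have key : (balA A M').comp (balMap A A f) = f.toAddMonoidHom.toIntLinearMap.comp (balA A M) := by
    apply Submodule.linearMap_qext
    apply TensorProduct.ext'
    intro a m
    show balA A M' (balMap A A f (Submodule.Quotient.mk (a ⊗ₜ[ℤ] m)))
      = f.toAddMonoidHom.toIntLinearMap (balA A M (Submodule.Quotient.mk (a ⊗ₜ[ℤ] m)))
    rw [balMap_mk_tmul, balA_mk_tmul, balA_mk_tmul]
    exact (f.map_smul a m).symm
  exact LinearMap.congr_fun key t

lemma balA_Abal (M : Type w) [AddCommGroup M] [Module A M] (m : M) :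
    balA A M (Abal A M m) = m := by
  rw [Abal_apply, balA_mk_tmul, one_smul]

lemma Abal_balA (M : Type w) [AddCommGroup M] [Module A M] (t : BalTensor A A M) :
    Abal A M (balA A M t) = t := by
  have key : (Abal A M).comp (balA A M) = LinearMap.id := by
    apply Submodule.linearMap_qext
    apply TensorProduct.ext'
    intro a m
    show Abal A M (balA A M (Submodule.Quotient.mk (a ⊗ₜ[ℤ] m)))
      = Submodule.Quotient.mk (a ⊗ₜ[ℤ] m)
    rw [balA_mk_tmul, Abal_apply, ← mk_smul_tmul]
    rw [show (op a • (1 : A)) = a from one_mul a]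
  exact LinearMap.congr_fun key t

lemma rightFlat_self : RightFlat A A := by
  intro M₁ M₂ M₃ _ _ _ _ _ _ f g hfg
  intro y
  constructor
  · intro hy
    have hg0 : g (balA A M₂ y) = 0 := by
      rw [← balA_balMap g y, hy, map_zero]
    obtain ⟨m, hm⟩ := (hfg (balA A M₂ y)).mp hg0
    refine ⟨Abal A M₁ m, ?_⟩
    have : balMap A A f (Abal A M₁ m) = Abal A M₂ (f m) := by
      rw [Abal_apply, Abal_apply, balMap_mk_tmul]
    rw [this, hm, Abal_balA]
  · rintro ⟨x, rfl⟩
    exact balMap_comp_eq_zero f g (fun m => hfg.apply_apply_eq_zero m) x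

end Lemmas5
section Lemmas6

variable {A : Type u} [Ring A]

lemma noetherian_implies_injective (hA : IsNoetherianRing A)
    (M : Type u) [AddCommGroup M] [Module A M]
    (I : Type u) (F : I → Type u) [∀ i, AddCommGroup (F i)] [∀ i, Module Aᵐᵒᵖ (F i)]
    (hF : ∀ i, RightFlat A (F i)) : Function.Injective (balPiCompare A M F) := by
  haveI := hA
  classical
  rw [← LinearMap.ker_eq_bot, LinearMap.ker_eq_bot']
  intro x hx
  obtain ⟨t, rfl⟩ := Submodule.Quotient.mk_surjective _ x
  obtain ⟨s, rfl⟩ := TensorProduct.exists_finset t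
  set M' : Submodule A M := Submodule.span A ((s.image Prod.snd : Finset M) : Set M) with hM'def
  have hmem : ∀ p ∈ s, (p : (∀ i, F i) × M).2 ∈ M' := fun p hp =>
    Submodule.subset_span (by
      simp only [Finset.coe_image, Set.mem_image, Finset.mem_coe]
      exact ⟨p, hp, rfl⟩)
  set t' : (∀ i, F i) ⊗[ℤ] M' := ∑ p ∈ s.attach, p.1.1 ⊗ₜ[ℤ] (⟨p.1.2, hmem p.1 p.2⟩ : M')
    with ht'def
  have hlift : balMap A (∀ i, F i) M'.subtype (Submodule.Quotient.mk t')
      = Submodule.Quotient.mk (∑ p ∈ s, p.1 ⊗ₜ[ℤ] p.2) := by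
    rw [balMap]
    erw [Submodule.mapQ_apply]
    congr 1
    rw [ht'def]
    erw [map_sum]
    rw [← Finset.sum_attach s (fun p => p.1 ⊗ₜ[ℤ] p.2)]
    exact Finset.sum_congr rfl fun p _ => by erw [LinearMap.lTensor_tmul]; rfl
  haveI hfin : Module.Finite A M' := Module.Finite.span_of_finite A (Finset.finite_toSet _)
  obtain ⟨k, g, hg⟩ := Module.Finite.exists_fin' A M'
  haveI : Module.Finite A (LinearMap.ker g) :=
    Module.Finite.iff_fg.mpr (IsNoetherian.noetherian _)
  obtain ⟨n, f₀, hf₀⟩ := Module.Finite.exists_fin' A (LinearMap.ker g)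
  set f : (Fin n → A) →ₗ[A] (Fin k → A) := (LinearMap.ker g).subtype.comp f₀ with hfdef
  have hexact : Function.Exact f g := by
    rw [LinearMap.exact_iff, hfdef, LinearMap.range_comp,
      LinearMap.range_eq_top.mpr hf₀, Submodule.map_top, Submodule.range_subtype]
  have hinj := balPiCompare_fp_injective F f g hexact hg
  have hcomp : ∀ i, balMap A (F i) M'.subtype (balPiCompare A M' F
      (Submodule.Quotient.mk t') i) = 0 := by
    intro i
    rw [balPiCompare_apply, ← balMap_balMapLeft_comm, hlift]
    exact congrFun hx i
  have hzero : ∀ i, balPiCompare A M' F (Submodule.Quotient.mk t') i = 0 := by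
    intro i
    apply (hF i).balMap_injective M'.subtype (Submodule.injective_subtype M')
    rw [hcomp i, map_zero]
  have ht'0 : (Submodule.Quotient.mk t' : BalTensor A (∀ i, F i) M') = 0 := by
    apply hinj
    rw [map_zero]
    funext i
    exact hzero i
  rw [← hlift, ht'0, map_zero]

end Lemmas6
section Lemmas7

variable {A : Type u} [Ring A]

lemma injective_implies_noetherian
    (H : ∀ (M : Type u) [AddCommGroup M] [Module A M],
      Function.Injective (balPiCompare A M (fun _ : A => A))) :
    IsNoetherianRing A := by
  classical
  by_contra hA
  haveI : Infinite A := by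
    rw [← not_finite_iff_infinite]
    intro hfin
    exact hA (isNoetherian_of_finite A A)
  have h1 : ¬ ∀ c : ℕ →o Submodule A A, ∃ n, ∀ m, n ≤ m → c n = c m :=
    fun h => hA (monotone_stabilizes_iff_noetherian.mp h)
  push_neg at h1
  obtain ⟨c, hc⟩ := h1
  set Itop : Submodule A A := ⨆ n, c n with hItop
  have hmem_iSup : ∀ b : A, b ∈ Itop ↔ ∃ n, b ∈ c n := fun b =>
    Submodule.mem_iSup_of_directed _ (c.monotone.directed_le)
  have hstep : ∀ n, ∃ b, b ∈ Itop ∧ b ∉ c n := by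
    intro n
    obtain ⟨m, hnm, hne⟩ := hc n
    obtain ⟨b, hbm, hbn⟩ := SetLike.exists_of_lt (lt_of_le_of_ne (c.monotone hnm) hne)
    exact ⟨b, (hmem_iSup b).mpr ⟨m, hbm⟩, hbn⟩
  choose a haI han using hstep
  set e : ℕ ↪ A := Infinite.natEmbedding A with he
  set gfun : A → A := Function.extend e a (fun _ => 0) with hgfun
  have hg_e : ∀ n, gfun (e n) = a n := fun n => e.injective.extend_apply a _ n
  have hg_mem : ∀ i, gfun i ∈ Itop := by
    intro i
    rw [hgfun, Function.extend_def]
    split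
    · exact haI _
    · exact Submodule.zero_mem _
  -- the subgroup of functions expressible as finite sums ∑ vⱼ · bⱼ with bⱼ ∈ Itop
  set K : Submodule ℤ (A → A) :=
    Submodule.span ℤ {h | ∃ (v : A → A) (b : A), b ∈ Itop ∧ h = fun i => v i * b} with hK
  have hKbound : ∀ h ∈ K, ∃ n, ∀ i, h i ∈ c n := by
    intro h hh
    refine Submodule.span_induction ?_ ?_ ?_ ?_ hh
    · rintro x ⟨v, b, hb, rfl⟩
      obtain ⟨n, hn⟩ := (hmem_iSup b).mp hb
      exact ⟨n, fun i => by simpa [smul_eq_mul] using (c n).smul_mem (v i) hn⟩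
    · exact ⟨0, fun i => Submodule.zero_mem _⟩
    · rintro x y hx hy ⟨n, hn⟩ ⟨m, hm⟩
      refine ⟨max n m, fun i => Submodule.add_mem _ ?_ ?_⟩
      · exact c.monotone (le_max_left n m) (hn i)
      · exact c.monotone (le_max_right n m) (hm i)
    · rintro z x hx ⟨n, hn⟩
      exact ⟨n, fun i => zsmul_mem (hn i) z⟩
  have hgK : gfun ∉ K := by
    intro hgk
    obtain ⟨n, hn⟩ := hKbound gfun hgk
    have := hn (e n)
    rw [hg_e n] at this
    exact han n this
  -- the auxiliary map φ : (A → A) ⊗ (A ⧸ Itop) → (A → A) ⧸ K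
  set Q := (A → A) ⧸ K with hQ
  set B₂ : (A → A) →ₗ[ℤ] A →ₗ[ℤ] Q := LinearMap.mk₂ ℤ (fun v b => K.mkQ (fun i => v i * b))
    (fun v v' b => by
      show K.mkQ (fun i => (v + v') i * b)
        = K.mkQ (fun i => v i * b) + K.mkQ (fun i => v' i * b)
      rw [← map_add]
      congr 1
      funext i
      show (v + v') i * b = v i * b + v' i * b
      rw [Pi.add_apply, add_mul])
    (fun z v b => by
      show K.mkQ (fun i => (z • v) i * b) = z • K.mkQ (fun i => v i * b)
      rw [← map_smul]
      congr 1
      funext i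
      show (z • v) i * b = z • (v i * b)
      rw [Pi.smul_apply, smul_mul_assoc])
    (fun v b b' => by
      show K.mkQ (fun i => v i * (b + b'))
        = K.mkQ (fun i => v i * b) + K.mkQ (fun i => v i * b')
      rw [← map_add]
      congr 1
      funext i
      exact mul_add _ _ _)
    (fun z v b => by
      show K.mkQ (fun i => v i * (z • b)) = z • K.mkQ (fun i => v i * b)
      rw [← map_smul]
      congr 1
      funext i
      exact mul_smul_comm z (v i) b) with hB₂
  have hB₂app : ∀ (v : A → A) (b : A), B₂ v b = K.mkQ (fun i => v i * b) := fun v b => by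
    rw [hB₂]
    rfl
  have h₀ : Itop.restrictScalars ℤ ≤ LinearMap.ker B₂.flip := by
    intro b hb
    rw [LinearMap.mem_ker]
    apply LinearMap.ext
    intro v
    rw [LinearMap.flip_apply, hB₂app, LinearMap.zero_apply]
    exact (Submodule.Quotient.mk_eq_zero K).mpr (Submodule.subset_span ⟨v, b, hb, rfl⟩)
  set Ψ : (A ⧸ Itop) →ₗ[ℤ] ((A → A) →ₗ[ℤ] Q) :=
    (Submodule.liftQ _ B₂.flip h₀).comp
      (Submodule.Quotient.restrictScalarsEquiv ℤ Itop).symm.toLinearMap with hΨ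
  set φ : (A → A) ⊗[ℤ] (A ⧸ Itop) →ₗ[ℤ] Q := TensorProduct.lift Ψ.flip with hφ
  have hφ_tmul : ∀ (v : A → A) (b : A),
      φ (v ⊗ₜ[ℤ] (Submodule.Quotient.mk b : A ⧸ Itop)) = K.mkQ (fun i => v i * b) := by
    intro v b
    rw [hφ]
    erw [TensorProduct.lift.tmul]
  have hφrels : balRels A (A → A) (A ⧸ Itop) ≤ LinearMap.ker φ := by
    rw [balRels, Submodule.span_le]
    rintro _ ⟨α, v, m, rfl⟩
    obtain ⟨b, rfl⟩ := Submodule.Quotient.mk_surjective Itop m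
    rw [SetLike.mem_coe, LinearMap.mem_ker, map_sub]
    have e1 : φ ((op α • v) ⊗ₜ[ℤ] (Submodule.Quotient.mk b : A ⧸ Itop))
        = K.mkQ (fun i => v i * α * b) := by
      rw [hφ_tmul (op α • v) b]
      congr 1
    have e2 : φ (v ⊗ₜ[ℤ] (α • (Submodule.Quotient.mk b : A ⧸ Itop)))
        = K.mkQ (fun i => v i * (α * b)) := by
      rw [show (α • (Submodule.Quotient.mk b : A ⧸ Itop)) = Submodule.Quotient.mk (α * b) from
        rfl]
      exact hφ_tmul v (α * b)
    rw [e1, e2, sub_eq_zero]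
    congr 1
    funext i
    rw [mul_assoc]
  -- the witness element
  set x : BalTensor A (∀ _ : A, A) (A ⧸ Itop) :=
    Submodule.Quotient.mk (gfun ⊗ₜ[ℤ] (Submodule.Quotient.mk 1 : A ⧸ Itop)) with hx
  have hx0 : balPiCompare A (A ⧸ Itop) (fun _ : A => A) x = 0 := by
    funext i
    rw [Pi.zero_apply, balPiCompare_apply, hx, balMapLeft_mk_tmul]
    have hcoord : (LinearMap.proj i : (∀ _ : A, A) →ₗ[Aᵐᵒᵖ] A) gfun = gfun i := rfl
    rw [hcoord]
    calc (Submodule.Quotient.mk (gfun i ⊗ₜ[ℤ] (Submodule.Quotient.mk 1 : A ⧸ Itop))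
          : BalTensor A A (A ⧸ Itop))
        = Submodule.Quotient.mk ((op (gfun i) • (1 : A)) ⊗ₜ[ℤ]
            (Submodule.Quotient.mk 1 : A ⧸ Itop)) := by
          rw [show (op (gfun i) • (1 : A)) = gfun i from one_mul _]
      _ = Submodule.Quotient.mk ((1 : A) ⊗ₜ[ℤ]
            (gfun i • (Submodule.Quotient.mk 1 : A ⧸ Itop))) := mk_smul_tmul _ _ _
      _ = 0 := by
          rw [show (gfun i • (Submodule.Quotient.mk 1 : A ⧸ Itop)) = 0 from
            (Submodule.Quotient.mk_eq_zero Itop).mpr (by simpa using hg_mem i)]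
          rw [TensorProduct.tmul_zero]
          exact (Submodule.Quotient.mk_eq_zero _).mpr (Submodule.zero_mem _)
  have hxz : x = 0 := H (A ⧸ Itop) (by rw [hx0, map_zero])
  rw [hx, Submodule.Quotient.mk_eq_zero] at hxz
  have : φ (gfun ⊗ₜ[ℤ] (Submodule.Quotient.mk 1 : A ⧸ Itop)) = 0 := hφrels hxz
  rw [hφ_tmul gfun 1] at this
  apply hgK
  have hgfun1 : (fun i => gfun i * 1) = gfun := by funext i; rw [mul_one]
  rw [hgfun1] at this
  exact (Submodule.Quotient.mk_eq_zero K).mp this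

end Lemmas7
/-- A ring `A` is left noetherian iff for every left module `M` and every family of flat
right modules `Fᵢ` the canonical map `(∏ᵢ Fᵢ) ⊗_A M → ∏ᵢ (Fᵢ ⊗_A M)` is injective, iff the
same holds for the family of `card A` copies of the rank one free right module `A`. -/
theorem noetherian_criterion (A : Type u) [Ring A] :
    (IsNoetherianRing A ↔
      ∀ (M : Type u) [AddCommGroup M] [Module A M] (I : Type u) (F : I → Type u)
        [∀ i, AddCommGroup (F i)] [∀ i, Module Aᵐᵒᵖ (F i)],
        (∀ i, RightFlat A (F i)) → Function.Injective (balPiCompare A M F)) ∧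
    (IsNoetherianRing A ↔
      ∀ (M : Type u) [AddCommGroup M] [Module A M],
        Function.Injective (balPiCompare A M (fun _ : A => A))) := by
  constructor
  · constructor
    · intro h M _ _ I F _ _ hF
      exact noetherian_implies_injective h M I F hF
    · intro h
      apply injective_implies_noetherian
      intro M _ _
      exact h M A (fun _ : A => A) (fun _ => rightFlat_self)
  · constructor
    · intro h M _ _
      exact noetherian_implies_injective h M A (fun _ : A => A) (fun _ => rightFlat_self)
    · exact injective_implies_noetherian

end
end

section
/- Left coherence of rings is invariant under Morita equivalence: if A and B are rings whose categories of left modules are equivalent (as abelian categories), then A is left coherent if and only if B is left coherent. In particular, if A is left coherent then so is the matrix ring Mat_n(A) for every positive integer n. -/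
open TensorProduct MulOpposite CategoryTheory

universe u v w x

set_option linter.unusedSectionVars false
set_option linter.unusedVariables false

noncomputable section

/-!
A ring `A` is left coherent iff the kernel of every map from a finitely generated module to a
finitely generated projective module is finitely generated, and this condition is categorical:
a module is finitely generated iff the top of its lattice of subobjects is a compact element,
and an equivalence of module categories preserves subobject lattices, projectivity and kernels.
For matrix rings, restrict scalars to `A`: finitely generated free `Mat_n(A)`-modules are
finitely generated free `A`-modules, and a submodule that is finitely generated over `A` is
finitely generated over `Mat_n(A)`.
-/

open Limits

theorem IsCompactElement.map_orderIso {α β : Type*} [CompleteLattice α] [CompleteLattice β]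
    {k : α} (hk : IsCompactElement k) (e : α ≃o β) : IsCompactElement (e k) := by
  rw [CompleteLattice.isCompactElement_iff_le_of_directed_sSup_le] at hk ⊢
  intro s hne hdir hle
  have hdir' : DirectedOn (· ≤ ·) (e.symm '' s) := by
    rintro _ ⟨x, hx, rfl⟩ _ ⟨y, hy, rfl⟩
    obtain ⟨z, hz, hxz, hyz⟩ := hdir x hx y hy
    exact ⟨e.symm z, ⟨z, hz, rfl⟩, e.symm.monotone hxz, e.symm.monotone hyz⟩
  have hle' : k ≤ sSup (e.symm '' s) := by
    simpa [OrderIso.map_sSup] using e.symm.monotone hle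
  obtain ⟨_, ⟨y, hy, rfl⟩, hky⟩ := hk _ (hne.image _) hdir' hle'
  exact ⟨y, hy, by simpa using e.monotone hky⟩

theorem Module.Finite.of_submoduleOrderIso {R S M N : Type*} [Semiring R] [Semiring S]
    [AddCommMonoid M] [Module R M] [AddCommMonoid N] [Module S N]
    (e : Submodule R M ≃o Submodule S N) [Module.Finite R M] : Module.Finite S N := by
  have hM : IsCompactElement (⊤ : Submodule R M) :=
    (Submodule.fg_iff_compact _).1 Module.Finite.fg_top
  rw [Module.finite_def, Submodule.fg_iff_compact, ← e.map_top]
  exact hM.map_orderIso e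

namespace CategoryTheory.Equivalence

variable {A B : Type*} [Ring A] [Ring B] (e : ModuleCat.{w} A ≌ ModuleCat.{w} B)

def submoduleOrderIso (N : ModuleCat.{w} A) : Submodule A N ≃o Submodule B (e.functor.obj N) :=
  (ModuleCat.subobjectModule N).symm.trans <|
    (Subobject.lowerEquivalence (MonoOver.congr N e)).toOrderIso.trans
      (ModuleCat.subobjectModule (e.functor.obj N))

theorem moduleFinite_functor_obj_iff (N : ModuleCat.{w} A) :
    Module.Finite B (e.functor.obj N) ↔ Module.Finite A N :=
  ⟨fun _ ↦ .of_submoduleOrderIso (e.submoduleOrderIso N).symm,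
    fun _ ↦ .of_submoduleOrderIso (e.submoduleOrderIso N)⟩

end CategoryTheory.Equivalence

namespace LeftCoherent

variable {A : Type u} [Ring A]

theorem ker_fg (hA : LeftCoherent A) {M Q : Type*} [AddCommGroup M] [Module A M]
    [AddCommGroup Q] [Module A Q] [Module.Finite A M] [Module.Finite A Q] [Module.Projective A Q]
    (f : M →ₗ[A] Q) : (LinearMap.ker f).FG := by
  obtain ⟨k, π, hπ⟩ := Module.Finite.exists_fin' A M
  obtain ⟨l, ρ, hρ⟩ := Module.Finite.exists_fin' A Q
  obtain ⟨σ, hσ⟩ := ρ.exists_rightInverse_of_surjective (LinearMap.range_eq_top.2 hρ)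
  have hσinj : Function.Injective σ :=
    Function.LeftInverse.injective (g := ρ) (LinearMap.congr_fun hσ)
  have hker : LinearMap.ker (σ ∘ₗ f ∘ₗ π) = (LinearMap.ker f).comap π := by
    rw [LinearMap.ker_comp, LinearMap.ker_eq_bot.2 hσinj, Submodule.comap_bot,
      LinearMap.ker_comp]
  simpa [hker, Submodule.map_comap_eq_of_surjective hπ] using
    (hA k l (σ ∘ₗ f ∘ₗ π)).map π

theorem finite_kernel [Small.{w} A] (hA : LeftCoherent A) {P Q : ModuleCat.{w} A}
    [Module.Finite A P] [Module.Finite A Q] [Projective Q] (f : P ⟶ Q) :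
    Module.Finite A (kernel f : ModuleCat.{w} A) :=
  have : Module.Finite A (LinearMap.ker f.hom) := .iff_fg.2 (hA.ker_fg f.hom)
  .equiv (ModuleCat.kernelIsoKer f).symm.toLinearEquiv

end LeftCoherent

theorem leftCoherent_of_finite_kernel {A : Type u} [Ring A]
    (h : ∀ {P Q : ModuleCat.{max u w} A} [Module.Finite A P] [Module.Finite A Q]
      [Projective Q] (f : P ⟶ Q), Module.Finite A (kernel f : ModuleCat.{max u w} A)) :
    LeftCoherent A := by
  intro n m f
  let eₙ : ULift.{w} (Fin n → A) ≃ₗ[A] (Fin n → A) := ULift.moduleEquiv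
  let eₘ : ULift.{w} (Fin m → A) ≃ₗ[A] (Fin m → A) := ULift.moduleEquiv
  let g := ModuleCat.ofHom (eₘ.symm.toLinearMap ∘ₗ f ∘ₗ eₙ.toLinearMap)
  have : Module.Projective A (ULift.{w} (Fin m → A)) :=
    .of_basis ((Pi.basisFun A (Fin m)).map eₘ.symm)
  have : Module.Finite A (LinearMap.ker g.hom) :=
    .equiv (ModuleCat.kernelIsoKer g).toLinearEquiv
  have hker : LinearMap.ker g.hom = (LinearMap.ker f).comap eₙ.toLinearMap := by
    simp [g, LinearMap.ker_comp]
  simpa [hker, Submodule.map_comap_eq_of_surjective eₙ.surjective] using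
    (Module.Finite.iff_fg.1 this).map eₙ.toLinearMap

theorem LeftCoherent.of_equivalence {A : Type u} {B : Type v} [Ring A] [Ring B]
    (e : ModuleCat.{max u v} A ≌ ModuleCat.{max u v} B) (hA : LeftCoherent A) :
    LeftCoherent B := by
  refine leftCoherent_of_finite_kernel.{v, u} fun {P Q} _ _ _ f ↦ ?_
  have : Module.Finite A (e.inverse.obj P) := (e.symm.moduleFinite_functor_obj_iff P).2 ‹_›
  have : Module.Finite A (e.inverse.obj Q) := (e.symm.moduleFinite_functor_obj_iff Q).2 ‹_›
  have : Projective (e.inverse.obj Q) := (e.symm.map_projective_iff Q).2 ‹_›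
  have := hA.finite_kernel (e.inverse.map f)
  have : Module.Finite A (e.inverse.obj (kernel f)) :=
    .equiv (PreservesKernel.iso e.inverse f).symm.toLinearEquiv
  exact (e.symm.moduleFinite_functor_obj_iff _).1 this

theorem LeftCoherent.matrix {A : Type u} [Ring A] (hA : LeftCoherent A) (n : ℕ) :
    LeftCoherent (Matrix (Fin n) (Fin n) A) := by
  intro k m f
  have : Module.Projective A (Fin m → Matrix (Fin n) (Fin n) A) :=
    .of_basis (Module.Free.chooseBasis A _)
  refine Submodule.FG.of_restrictScalars A ?_
  rw [← LinearMap.ker_restrictScalars]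
  exact hA.ker_fg (f.restrictScalars A)

/-- Left coherence is invariant under Morita equivalence: if the categories of left modules of
two rings are equivalent, then one ring is left coherent iff the other is.  In particular
left coherence passes to matrix rings. -/
theorem leftCoherent_morita_invariant :
    (∀ (A : Type u) (B : Type v) [Ring A] [Ring B],
      (ModuleCat.{max u v} A ≌ ModuleCat.{max u v} B) → (LeftCoherent A ↔ LeftCoherent B)) ∧
    (∀ (A : Type u) [Ring A] (n : ℕ), 0 < n →
      (LeftCoherent A → LeftCoherent (Matrix (Fin n) (Fin n) A))) :=
  ⟨fun _ _ _ _ e ↦ ⟨.of_equivalence e, .of_equivalence e.symm⟩,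
    fun _ _ n _ hA ↦ hA.matrix n⟩

end
end
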